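/- arXiv:math-ph/0509053 — 3 statements merged into one kernel-verified Lean document; each statement's English description precedes it below -/
import Mathlib

section
/- Let f_1 > f_c > 0 be real numbers and set c = f_c/f_1. Let p/q be an irreducible fraction (q ≥ 1, gcd(p,q) = 1) with canonical continued fraction expansion [a_0; a_1, …, a_n]. Let S(p/q) be the set of real numbers ν such that p/q is the n-th convergent of ν and, denoting by x_{n+1} the (n+1)-st partial quotient of ν, the chained inequality |ν − p/q| ≤ c/q ≤ 1/(x_{n+1} q²) holds. Then S(p/q) is nonempty if and only if q ≤ ⌊f_1/f_c⌋, where ⌊·⌋ denotes the integer part. -/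
/-- One step of the Gauss continued-fraction algorithm (returns `0` upon termination). -/
noncomputable def cfStep (y : ℝ) : ℝ := if Int.fract y = 0 then 0 else (Int.fract y)⁻¹

/-- Iterates of the Gauss map used to compute the canonical continued fraction of `x`. -/
noncomputable def cfIter (x : ℝ) : ℕ → ℝ
  | 0 => x
  | n + 1 => cfStep (cfIter x n)

/-- The `n`-th partial quotient of the canonical continued fraction expansion of `x`
(by convention it is `0` past the end of a finite expansion). -/
noncomputable def pquot (x : ℝ) (n : ℕ) : ℤ := ⌊cfIter x n⌋

/-- Value of a finite continued fraction `[a₀; a₁, …, aₙ]`. -/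
noncomputable def cfEval : List ℤ → ℝ
  | [] => 0
  | [a] => (a : ℝ)
  | a :: l => (a : ℝ) + (cfEval l)⁻¹

/-- The canonical continued fraction expansion of `x` is exactly `[A 0; A 1, …, A n]`. -/
def IsCanonCF (x : ℝ) (A : ℕ → ℤ) (n : ℕ) : Prop :=
  (∀ i ≤ n, pquot x i = A i) ∧ Int.fract (cfIter x n) = 0 ∧ ∀ i < n, Int.fract (cfIter x i) ≠ 0

/-- The `n`-th convergent `pₙ/qₙ = [x₀; x₁, …, xₙ]` of `x`. -/
noncomputable def cfConv (x : ℝ) (n : ℕ) : ℝ := cfEval ((List.range (n + 1)).map (pquot x))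

open scoped Classical in
/-- The resolution map `r_a`: truncate the canonical continued fraction expansion just
before the first partial quotient `xᵢ` (`i ≥ 1`) with `xᵢ ≥ a`; identity otherwise. -/
noncomputable def ra (a : ℕ) (x : ℝ) : ℝ :=
  if h : ∃ i, 1 ≤ i ∧ (a : ℤ) ≤ pquot x i then
    cfEval ((List.range (Nat.find h)).map (pquot x))
  else x

/-- The locking zone `Z_a(r) = {x ∈ [0, a) : r_a(x) = r}`. -/
noncomputable def lockZone (a : ℕ) (r : ℝ) : Set ℝ :=
  {x | x ∈ Set.Ico (0 : ℝ) (a : ℝ) ∧ ra a x = r}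

/-- Right boundary `ν⁺` of a locking zone. -/
noncomputable def nuPlus (a : ℕ) (r : ℝ) : ℝ := sSup (lockZone a r)

/-- Left boundary `ν⁻` of a locking zone. -/
noncomputable def nuMinus (a : ℕ) (r : ℝ) : ℝ := sInf (lockZone a r)


/-!
A witness `ν` forces `c / q ≤ 1 / (x_{n+1} q²) ≤ 1 / q²`, i.e. `q ≤ 1 / c`.
Conversely, if `c q ≤ 1`, pick `t > 1` with `1 / t ≤ c q` and `⌊t⌋ c q ≤ 1`, and let
`ν = [a₀; a₁, …, aₙ, t]`. The expansion of `ν` is that of `p/q` followed by `⌊t⌋`. Writing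
`ν = (p t + p') / (q t + q')` with the matrix `∏ !![aᵢ, 1; 1, 0] = !![p, p'; q, q']`, whose
determinant is `±1`, gives `|ν - p/q| = 1 / (q (q t + q')) ≤ 1 / (t q²) ≤ c / q`.
-/

lemma cfIter_succ' (x : ℝ) (n : ℕ) : cfIter x (n + 1) = cfIter (cfStep x) n := by
  induction n with
  | zero => rfl
  | succ n ih => exact congrArg cfStep ih

lemma pquot_succ (x : ℝ) (n : ℕ) : pquot x (n + 1) = pquot (cfStep x) n :=
  congrArg Int.floor (cfIter_succ' x n)

lemma inv_cfStep (y : ℝ) : (cfStep y)⁻¹ = Int.fract y := by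
  unfold cfStep
  split_ifs with h
  · simp [h]
  · exact inv_inv _

lemma one_lt_cfStep {y : ℝ} (hy : Int.fract y ≠ 0) : 1 < cfStep y := by
  rw [cfStep, if_neg hy]
  exact one_lt_inv_iff₀.2 ⟨(Int.fract_nonneg y).lt_of_ne' hy, Int.fract_lt_one y⟩

lemma one_le_pquot_succ {x : ℝ} {n : ℕ} (hx : Int.fract (cfIter x n) ≠ 0) :
    1 ≤ pquot x (n + 1) :=
  Int.le_floor.2 (by exact_mod_cast (one_lt_cfStep hx).le)

lemma cfEval_cons {l : List ℤ} (hl : l ≠ []) (a : ℤ) :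
    cfEval (a :: l) = a + (cfEval l)⁻¹ := by
  obtain ⟨b, l, rfl⟩ := List.exists_cons_of_ne_nil hl
  rfl

lemma cfConv_eq_self {x : ℝ} {n : ℕ} (hx : Int.fract (cfIter x n) = 0) : cfConv x n = x := by
  induction n generalizing x with
  | zero =>
    have := Int.floor_add_fract x
    simp_all [cfConv, cfEval, pquot, cfIter]
  | succ n ih =>
    rw [cfIter_succ'] at hx
    have hmap : (List.range (n + 1 + 1)).map (pquot x) =
        pquot x 0 :: (List.range (n + 1)).map (pquot (cfStep x)) := by
      simp [List.range_succ_eq_map, Function.comp_def, pquot_succ]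
    rw [cfConv, hmap, cfEval_cons (by simp), ← cfConv, ih hx, inv_cfStep]
    exact Int.floor_add_fract x

noncomputable def cfEvalWith : List ℤ → ℝ → ℝ
  | [], s => s
  | a :: l, s => a + (cfEvalWith l s)⁻¹

lemma one_lt_cfEvalWith {l : List ℤ} (hl : ∀ a ∈ l, 1 ≤ a) {s : ℝ} (hs : 1 < s) :
    1 < cfEvalWith l s := by
  induction l with
  | nil => exact hs
  | cons a l ih =>
    have hlt : 1 < cfEvalWith l s := ih fun b hb => hl b (List.mem_cons_of_mem a hb)
    have ha : (1 : ℝ) ≤ a := by exact_mod_cast hl a List.mem_cons_self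
    have := inv_pos.2 (zero_lt_one.trans hlt)
    rw [cfEvalWith]
    linarith

lemma floor_intCast_add_inv (a : ℤ) {y : ℝ} (hy : 1 < y) : ⌊(a : ℝ) + y⁻¹⌋ = a := by
  rw [Int.floor_intCast_add, Int.floor_eq_zero_iff.2 ⟨by positivity, inv_lt_one_of_one_lt₀ hy⟩,
    add_zero]

lemma cfStep_intCast_add_inv (a : ℤ) {y : ℝ} (hy : 1 < y) : cfStep (a + y⁻¹) = y := by
  have hfract : Int.fract ((a : ℝ) + y⁻¹) = y⁻¹ := by
    rw [Int.fract_intCast_add, Int.fract_eq_self]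
    exact ⟨by positivity, inv_lt_one_of_one_lt₀ hy⟩
  rw [cfStep, hfract, if_neg (by positivity), inv_inv]

lemma pquot_cfEvalWith {l : List ℤ} (hl : ∀ a ∈ l.tail, 1 ≤ a) {s : ℝ} (hs : 1 < s) :
    (∀ i (hi : i < l.length), pquot (cfEvalWith l s) i = l[i]) ∧
      cfIter (cfEvalWith l s) l.length = s := by
  induction l with
  | nil => exact ⟨fun i hi => absurd hi (Nat.not_lt_zero i), rfl⟩
  | cons a l ih =>
    have hl' : ∀ b ∈ l, 1 ≤ b := hl
    have hgt := one_lt_cfEvalWith hl' hs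
    have hstep : cfStep (cfEvalWith (a :: l) s) = cfEvalWith l s :=
      cfStep_intCast_add_inv a hgt
    obtain ⟨ihq, ihiter⟩ := ih fun b hb => hl' b (List.mem_of_mem_tail hb)
    refine ⟨fun i hi => ?_, by rw [List.length_cons, cfIter_succ', hstep, ihiter]⟩
    cases i with
    | zero => exact floor_intCast_add_inv a hgt
    | succ i => rw [pquot_succ, hstep, ihq i (by simpa using hi), List.getElem_cons_succ]

def cfMat : List ℤ → Matrix (Fin 2) (Fin 2) ℤ
  | [] => 1
  | a :: l => !![a, 1; 1, 0] * cfMat l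

section cfMat

variable (a : ℤ) (l : List ℤ)

@[simp] lemma cfMat_cons_zero_zero : cfMat (a :: l) 0 0 = a * cfMat l 0 0 + cfMat l 1 0 := by
  simp [cfMat, Matrix.mul_apply]

@[simp] lemma cfMat_cons_zero_one : cfMat (a :: l) 0 1 = a * cfMat l 0 1 + cfMat l 1 1 := by
  simp [cfMat, Matrix.mul_apply]

@[simp] lemma cfMat_cons_one_zero : cfMat (a :: l) 1 0 = cfMat l 0 0 := by
  simp [cfMat, Matrix.mul_apply]

@[simp] lemma cfMat_cons_one_one : cfMat (a :: l) 1 1 = cfMat l 0 1 := by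
  simp [cfMat, Matrix.mul_apply]

lemma det_cfMat : (cfMat l).det = (-1) ^ l.length := by
  induction l with
  | nil => simp [cfMat]
  | cons a l ih => rw [cfMat, Matrix.det_mul, ih, Matrix.det_fin_two_of]; simp [pow_succ]

lemma isCoprime_cfMat : IsCoprime (cfMat l 0 0) (cfMat l 1 0) := by
  have hdet := det_cfMat l
  rw [Matrix.det_fin_two] at hdet
  rcases neg_one_pow_eq_or ℤ l.length with h | h <;> rw [h] at hdet
  · exact ⟨cfMat l 1 1, -cfMat l 0 1, by linear_combination hdet⟩
  · exact ⟨-cfMat l 1 1, cfMat l 0 1, by linear_combination -hdet⟩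

variable {l}

lemma cfMat_bounds (hl : ∀ a ∈ l, 1 ≤ a) :
    1 ≤ cfMat l 0 0 ∧ 0 ≤ cfMat l 0 1 ∧ 0 ≤ cfMat l 1 0 ∧ 0 ≤ cfMat l 1 1 := by
  induction l with
  | nil => simp [cfMat]
  | cons a l ih =>
    obtain ⟨h00, h01, h10, h11⟩ := ih fun b hb => hl b (List.mem_cons_of_mem a hb)
    have ha : 1 ≤ a := hl a List.mem_cons_self
    simp only [cfMat_cons_zero_zero, cfMat_cons_zero_one, cfMat_cons_one_zero, cfMat_cons_one_one]
    refine ⟨by nlinarith, by positivity, by positivity, h01⟩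

lemma cfEvalWith_eq_div (hl : ∀ a ∈ l.tail, 1 ≤ a) {s : ℝ} (hs : 0 < s) :
    cfEvalWith l s = (cfMat l 0 0 * s + cfMat l 0 1) / (cfMat l 1 0 * s + cfMat l 1 1) := by
  induction l with
  | nil => simp [cfEvalWith, cfMat]
  | cons a l ih =>
    have hl' : ∀ b ∈ l, 1 ≤ b := hl
    obtain ⟨h00, h01, -, -⟩ := cfMat_bounds hl'
    have hnum : (0 : ℝ) < cfMat l 0 0 * s + cfMat l 0 1 := by
      have h00' : (1 : ℝ) ≤ cfMat l 0 0 := by exact_mod_cast h00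
      have h01' : (0 : ℝ) ≤ cfMat l 0 1 := by exact_mod_cast h01
      nlinarith
    rw [cfEvalWith, ih fun b hb => hl' b (List.mem_of_mem_tail hb), inv_div]
    push_cast [cfMat_cons_zero_zero, cfMat_cons_zero_one, cfMat_cons_one_zero, cfMat_cons_one_one]
    field_simp
    ring

lemma cfEval_eq_div (hne : l ≠ []) (hl : ∀ a ∈ l.tail, 1 ≤ a) :
    cfEval l = cfMat l 0 0 / cfMat l 1 0 := by
  induction l with
  | nil => exact absurd rfl hne
  | cons a l ih =>
    rcases eq_or_ne l [] with rfl | hl0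
    · simp [cfEval, cfMat]
    have hl' : ∀ b ∈ l, 1 ≤ b := hl
    have h00 : (1 : ℝ) ≤ cfMat l 0 0 := by exact_mod_cast (cfMat_bounds hl').1
    rw [cfEval_cons hl0, ih hl0 fun b hb => hl' b (List.mem_of_mem_tail hb), inv_div]
    push_cast [cfMat_cons_zero_zero, cfMat_cons_one_zero]
    field_simp

lemma cfMat_row_one_bounds (hne : l ≠ []) (hl : ∀ a ∈ l.tail, 1 ≤ a) :
    1 ≤ cfMat l 1 0 ∧ 0 ≤ cfMat l 1 1 := by
  obtain ⟨a, l, rfl⟩ := List.exists_cons_of_ne_nil hne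
  obtain ⟨h00, h01, -, -⟩ := cfMat_bounds (l := l) hl
  simpa using ⟨h00, h01⟩

end cfMat

lemma abs_cfEvalWith_sub_cfEval_le {l : List ℤ} (hne : l ≠ []) (hl : ∀ a ∈ l.tail, 1 ≤ a)
    {s : ℝ} (hs : 0 < s) : |cfEvalWith l s - cfEval l| ≤ 1 / (s * (cfMat l 1 0 : ℝ) ^ 2) := by
  obtain ⟨h10, h11⟩ := cfMat_row_one_bounds hne hl
  have hQ : (1 : ℝ) ≤ cfMat l 1 0 := by exact_mod_cast h10
  have hQ' : (0 : ℝ) ≤ cfMat l 1 1 := by exact_mod_cast h11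
  have hdet : |((cfMat l 0 1 * cfMat l 1 0 - cfMat l 0 0 * cfMat l 1 1 : ℤ) : ℝ)| = 1 := by
    rw [← Int.cast_abs, abs_sub_comm, ← Matrix.det_fin_two, det_cfMat]
    simp
  have hden : (0 : ℝ) < cfMat l 1 0 * s + cfMat l 1 1 := by positivity
  calc |cfEvalWith l s - cfEval l|
      = |((cfMat l 0 1 * cfMat l 1 0 - cfMat l 0 0 * cfMat l 1 1 : ℤ) : ℝ)| /
          (cfMat l 1 0 * (cfMat l 1 0 * s + cfMat l 1 1)) := by
        have hQ0 : (0 : ℝ) < cfMat l 1 0 := by linarith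
        rw [cfEvalWith_eq_div hl hs, cfEval_eq_div hne hl, div_sub_div _ _ hden.ne' hQ0.ne',
          abs_div, abs_of_pos (mul_pos hden hQ0)]
        congr 1
        · congr 1
          push_cast
          ring
        · ring
    _ ≤ 1 / (s * (cfMat l 1 0 : ℝ) ^ 2) := by
        rw [hdet]
        apply one_div_le_one_div_of_le (by positivity)
        nlinarith

lemma Int.eq_of_div_eq_div_of_isCoprime {a b c d : ℤ} (hb : 0 < b) (hd : 0 < d)
    (hab : IsCoprime a b) (hcd : IsCoprime c d) (h : (a : ℝ) / b = c / d) : b = d :=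
  (Rat.div_int_inj hb hd (Int.isCoprime_iff_gcd_eq_one.1 hab) (Int.isCoprime_iff_gcd_eq_one.1 hcd)
    (by exact_mod_cast h)).2

theorem exists_cfConv_eq_pquot_eq_abs_sub_le {x : ℝ} {n : ℕ} (hn : Int.fract (cfIter x n) = 0)
    (hlt : ∀ i < n, Int.fract (cfIter x i) ≠ 0) {p q : ℤ} (hq : 0 < q) (hpq : IsCoprime p q)
    (hx : x = p / q) {t : ℝ} (ht : 1 < t) :
    ∃ ν, cfConv ν n = x ∧ pquot ν (n + 1) = ⌊t⌋ ∧ |ν - x| ≤ 1 / (t * (q : ℝ) ^ 2) := by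
  set L := (List.range (n + 1)).map (pquot x) with hL
  have hne : L ≠ [] := by simp [L]
  have hlen : L.length = n + 1 := by simp [L]
  have htail : ∀ a ∈ L.tail, 1 ≤ a := by
    intro a ha
    rw [hL, List.range_succ_eq_map, List.map_cons, List.tail_cons, List.map_map] at ha
    obtain ⟨i, hi, rfl⟩ := List.mem_map.1 ha
    exact one_le_pquot_succ (hlt i (List.mem_range.1 hi))
  have hxL : cfEval L = x := cfConv_eq_self hn
  have hden : cfMat L 1 0 = q := by
    refine Int.eq_of_div_eq_div_of_isCoprime ?_ hq (isCoprime_cfMat L) hpq ?_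
    · exact (cfMat_row_one_bounds hne htail).1
    · rw [← cfEval_eq_div hne htail, hxL, hx]
  obtain ⟨hpref, hiter⟩ := pquot_cfEvalWith htail ht
  refine ⟨cfEvalWith L t, ?_, by rw [pquot, ← hlen, hiter], ?_⟩
  · rw [← hxL, cfConv]
    congr 1
    refine List.map_congr_left fun i hi => ?_
    have hi' : i < L.length := by rw [hlen]; exact List.mem_range.1 hi
    rw [hpref i hi', List.getElem_map, List.getElem_range]
  · rw [← hxL, ← hden]
    exact abs_cfEvalWith_sub_cfEval_le hne htail (zero_lt_one.trans ht)

lemma exists_one_lt_one_le_mul_floor_mul_le {ε : ℝ} (hε : 0 < ε) (hε1 : ε ≤ 1) :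
    ∃ t : ℝ, 1 < t ∧ 1 ≤ t * ε ∧ ⌊t⌋ * ε ≤ 1 := by
  rcases hε1.lt_or_eq with hlt | rfl
  · refine ⟨ε⁻¹, one_lt_inv_iff₀.2 ⟨hε, hlt⟩, (inv_mul_cancel₀ hε.ne').ge, ?_⟩
    calc (⌊ε⁻¹⌋ : ℝ) * ε ≤ ε⁻¹ * ε := by gcongr; exact Int.floor_le _
      _ = 1 := inv_mul_cancel₀ hε.ne'
  · refine ⟨3 / 2, by norm_num, by norm_num, ?_⟩
    rw [show ⌊(3 / 2 : ℝ)⌋ = 1 by norm_num [Int.floor_eq_iff]]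
    norm_num

lemma le_floor_div_iff_div_mul_le_one {a b : ℝ} (ha : 0 < a) (hb : 0 < b) (q : ℤ) :
    q ≤ ⌊b / a⌋ ↔ a / b * q ≤ 1 := by
  rw [Int.le_floor, le_div_iff₀ ha, div_mul_eq_mul_div, div_le_one hb, mul_comm]

theorem stmt_0_general (f1 fc : ℝ) (hfc : 0 < fc) (hf : fc < f1)
    (p q : ℤ) (hq : 1 ≤ q) (hcop : Int.gcd p q = 1)
    (n : ℕ) (A : ℕ → ℤ) (hA : IsCanonCF ((p : ℝ) / q) A n) :
    ({ν : ℝ |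
        cfConv ν n = (p : ℝ) / q ∧ 1 ≤ pquot ν (n + 1) ∧
        |ν - (p : ℝ) / q| ≤ (fc / f1) / q ∧
        (fc / f1) / q ≤ 1 / ((pquot ν (n + 1) : ℝ) * (q : ℝ) ^ 2)}).Nonempty ↔
      q ≤ ⌊f1 / fc⌋ := by
  obtain ⟨-, hfract, hnonterm⟩ := hA
  have hf1 : 0 < f1 := hfc.trans hf
  have hq0 : (0 : ℝ) < q := by exact_mod_cast hq
  rw [le_floor_div_iff_div_mul_le_one hfc hf1]
  set c := fc / f1
  have hc : 0 < c := div_pos hfc hf1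
  constructor
  · rintro ⟨ν, -, hk, -, hle⟩
    have hk' : (1 : ℝ) ≤ pquot ν (n + 1) := by exact_mod_cast hk
    calc c * q = c / q * q ^ 2 := by field_simp
      _ ≤ 1 / q ^ 2 * q ^ 2 := by
        refine mul_le_mul_of_nonneg_right (hle.trans ?_) (by positivity)
        exact one_div_le_one_div_of_le (by positivity) (le_mul_of_one_le_left (by positivity) hk')
      _ = 1 := by field_simp
  · intro hcq
    obtain ⟨t, ht, htc, hfloor⟩ := exists_one_lt_one_le_mul_floor_mul_le (mul_pos hc hq0) hcq
    obtain ⟨ν, hconv, hquot, habs⟩ := exists_cfConv_eq_pquot_eq_abs_sub_le hfract hnonterm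
      (by omega) (Int.isCoprime_iff_gcd_eq_one.2 hcop) rfl ht
    have hk : 1 ≤ ⌊t⌋ := Int.le_floor.2 (by exact_mod_cast ht.le)
    have hk' : (1 : ℝ) ≤ ⌊t⌋ := by exact_mod_cast hk
    refine ⟨ν, hconv, hquot ▸ hk, habs.trans ?_, ?_⟩
    · rw [div_le_div_iff₀ (by positivity) hq0]
      nlinarith
    · rw [hquot, div_le_div_iff₀ hq0 (mul_pos (by linarith) (by positivity))]
      nlinarith

/-- `S(p/q)` is nonempty iff `q ≤ ⌊f₁/f_c⌋`. -/
theorem stmt_0 (f1 fc : ℝ) (hfc : 0 < fc) (hf : fc < f1)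
    (p q : ℤ) (hq : 1 ≤ q) (hp : 0 ≤ p) (hcop : Int.gcd p q = 1)
    (n : ℕ) (A : ℕ → ℤ) (hA : IsCanonCF ((p : ℝ) / q) A n) :
    ({ν : ℝ |
        cfConv ν n = (p : ℝ) / q ∧ 1 ≤ pquot ν (n + 1) ∧
        |ν - (p : ℝ) / q| ≤ (fc / f1) / q ∧
        (fc / f1) / q ≤ 1 / ((pquot ν (n + 1) : ℝ) * (q : ℝ) ^ 2)}).Nonempty ↔
      q ≤ ⌊f1 / fc⌋ :=
  stmt_0_general f1 fc hfc hf p q hq hcop n A hA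
end

section
/- Fix an integer a ≥ 2 and let p/q ∈ (0, a) be a rational number whose canonical continued fraction expansion is [a_0; a_1, …, a_n, a] with a_i ≤ a − 1 for all i ≤ n. Then r_a(p/q) = [a_0; a_1, …, a_n] ≠ p/q, and the set {x ∈ [0, a) : r_a(x) = p/q} is the half-open interval whose excluded endpoint is p/q and whose included endpoint is [a_0; a_1, …, a_n, a − 1, 1, a]. (Such p/q are the transient rationals: their transit zone lies entirely on one side of p/q.) -/
/-! Write `x = [L; a]` with `L = [a₀, …, aₙ]`. If `r_a(y) = x`, the truncated expansion of `y` has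
value `x`, so by uniqueness of finite continued fractions it is `L, a` or `L, a - 1, 1`; the first
is impossible since truncation happens before the first entry `≥ a`. Hence `y = [L, a - 1, 1, t]`
with a real tail `t ≥ a`, and conversely every such `y` lies in the zone. Now
`[L, a - 1, 1, t] = [L; σ t]` where `σ t = a - 1 + t / (t + 1)` maps `[a, ∞)` onto `[σ a, a)`, and
`s ↦ [L; s]` is continuous and strictly monotone on `[1, ∞)`, so the zone is the half-open interval
between `[L; σ a] = [L, a - 1, 1, a]` (attained) and `[L; a] = x` (not attained). -/

/-- `cfTail [b₀, …, bₖ] t = [b₀; b₁, …, bₖ, t]`, with a real last entry `t`. -/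
noncomputable def cfTail : List ℤ → ℝ → ℝ
  | [], t => t
  | b :: l, t => b + (cfTail l t)⁻¹

@[simp] lemma cfTail_nil (t : ℝ) : cfTail [] t = t := rfl

@[simp] lemma cfTail_cons (b : ℤ) (l : List ℤ) (t : ℝ) :
    cfTail (b :: l) t = b + (cfTail l t)⁻¹ := rfl

lemma cfTail_append (l₁ l₂ : List ℤ) (t : ℝ) :
    cfTail (l₁ ++ l₂) t = cfTail l₁ (cfTail l₂ t) := by
  induction l₁ with
  | nil => rfl
  | cons b l ih => simp [ih]

lemma cfEval_append_singleton (l : List ℤ) (m : ℤ) : cfEval (l ++ [m]) = cfTail l m := by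
  induction l with
  | nil => rfl
  | cons b l ih => cases l <;> simp_all [cfEval]

lemma one_le_cfTail {l : List ℤ} {t : ℝ} (ht : 1 ≤ t) (hl : ∀ b ∈ l, 1 ≤ b) : 1 ≤ cfTail l t := by
  induction l with
  | nil => exact ht
  | cons b l ih =>
    have hb : (1 : ℝ) ≤ b := by exact_mod_cast hl b List.mem_cons_self
    have := ih fun c hc => hl c (List.mem_cons_of_mem _ hc)
    simp only [cfTail_cons]
    have : 0 < (cfTail l t)⁻¹ := by positivity
    linarith

lemma one_lt_cfTail {l : List ℤ} {t : ℝ} (ht : 1 < t) (hl : ∀ b ∈ l, 1 ≤ b) : 1 < cfTail l t := by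
  cases l with
  | nil => exact ht
  | cons b l =>
    have hb : (1 : ℝ) ≤ b := by exact_mod_cast hl b List.mem_cons_self
    have := one_le_cfTail ht.le fun c hc => hl c (List.mem_cons_of_mem _ hc)
    simp only [cfTail_cons]
    have : 0 < (cfTail l t)⁻¹ := by positivity
    linarith

section Peel

variable {b : ℤ} {z : ℝ}

lemma floor_intCast_add_inv_s10 (hz : 1 < z) : ⌊(b : ℝ) + z⁻¹⌋ = b := by
  rw [Int.floor_eq_iff]
  have : 0 < z⁻¹ := inv_pos.2 (by linarith)
  have : z⁻¹ < 1 := inv_lt_one_of_one_lt₀ hz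
  constructor <;> linarith

lemma fract_intCast_add_inv (hz : 1 < z) : Int.fract ((b : ℝ) + z⁻¹) = z⁻¹ := by
  rw [Int.fract, floor_intCast_add_inv_s10 hz]
  ring

lemma cfStep_intCast_add_inv_s10 (hz : 1 < z) : cfStep ((b : ℝ) + z⁻¹) = z := by
  have : z⁻¹ ≠ 0 := inv_ne_zero (by linarith)
  rw [cfStep, fract_intCast_add_inv hz, if_neg this, inv_inv]

end Peel

lemma cfIter_eq_iterate (x : ℝ) (n : ℕ) : cfIter x n = cfStep^[n] x := by
  induction n with
  | zero => rfl
  | succ n ih => rw [Function.iterate_succ_apply', ← ih]; rfl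

section Gauss

variable {l : List ℤ} {t : ℝ}

lemma one_lt_cfTail_drop (ht : 1 < t) (hl : ∀ b ∈ l.tail, 1 ≤ b) (i : ℕ) :
    1 < cfTail (l.drop (i + 1)) t := by
  refine one_lt_cfTail ht fun c hc => hl c ?_
  rw [← List.tail_drop, List.tail_drop_eq_drop_tail] at hc
  exact List.mem_of_mem_drop hc

lemma cfIter_cfTail (ht : 1 < t) (hl : ∀ b ∈ l.tail, 1 ≤ b) {i : ℕ} (hi : i ≤ l.length) :
    cfIter (cfTail l t) i = cfTail (l.drop i) t := by
  induction i generalizing l with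
  | zero => rfl
  | succ i ih =>
    obtain _ | ⟨b, l⟩ := l
    · simp at hi
    · have hl' : ∀ c ∈ l, 1 ≤ c := hl
      rw [cfIter_succ', cfTail_cons, cfStep_intCast_add_inv_s10 (one_lt_cfTail ht hl')]
      exact ih (fun c hc => hl' c (List.mem_of_mem_tail hc)) (by simpa using hi)

lemma pquot_cfTail (ht : 1 < t) (hl : ∀ b ∈ l.tail, 1 ≤ b) {i : ℕ} (hi : i < l.length) :
    pquot (cfTail l t) i = l[i] := by
  rw [pquot, cfIter_cfTail ht hl hi.le, List.drop_eq_getElem_cons hi, cfTail_cons,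
    floor_intCast_add_inv_s10 (one_lt_cfTail_drop ht hl i)]

lemma fract_cfIter_cfTail_ne_zero (ht : 1 < t) (hl : ∀ b ∈ l.tail, 1 ≤ b) {i : ℕ}
    (hi : i < l.length) : Int.fract (cfIter (cfTail l t) i) ≠ 0 := by
  rw [cfIter_cfTail ht hl hi.le, List.drop_eq_getElem_cons hi, cfTail_cons,
    fract_intCast_add_inv (one_lt_cfTail_drop ht hl i)]
  exact inv_ne_zero (by linarith [one_lt_cfTail_drop ht hl i])

lemma map_pquot_cfTail (ht : 1 < t) (hl : ∀ b ∈ l.tail, 1 ≤ b) :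
    (List.range l.length).map (pquot (cfTail l t)) = l :=
  List.ext_getElem (by simp) fun i _ hi => by simp [pquot_cfTail ht hl hi]

end Gauss

lemma cfTail_map_pquot_cfIter {y : ℝ} {k : ℕ} (h : ∀ i < k, Int.fract (cfIter y i) ≠ 0) :
    cfTail ((List.range k).map (pquot y)) (cfIter y k) = y := by
  induction k generalizing y with
  | zero => rfl
  | succ k ih =>
    have hstep : cfStep y = (Int.fract y)⁻¹ := if_neg (h 0 k.succ_pos)
    have hmap : (List.range (k + 1)).map (pquot y) =
        pquot y 0 :: (List.range k).map (pquot (cfStep y)) := by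
      simp [List.range_succ_eq_map, Function.comp_def, pquot_succ]
    rw [hmap, cfIter_succ', cfTail_cons,
      ih fun i hi => by rw [← cfIter_succ']; exact h (i + 1) (by omega), hstep, inv_inv]
    exact Int.floor_add_fract y

lemma fract_cfIter_ne_zero_of_lt {y : ℝ} {i k : ℕ} (hk : cfIter y k ≠ 0) (hi : i < k) :
    Int.fract (cfIter y i) ≠ 0 := by
  intro h
  refine hk (Nat.le_induction ?_ (fun j _ hj => ?_) k hi)
  · simp [cfIter, cfStep, h]
  · simp [cfIter, cfStep, hj]

lemma one_lt_cfIter_succ {y : ℝ} {i : ℕ} (h : Int.fract (cfIter y i) ≠ 0) :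
    1 < cfIter y (i + 1) := by
  rw [cfIter, cfStep, if_neg h]
  exact (one_lt_inv₀ ((Int.fract_nonneg _).lt_of_ne' h)).2 (Int.fract_lt_one _)

lemma one_le_pquot_succ_s10 {y : ℝ} {i : ℕ} (h : Int.fract (cfIter y i) ≠ 0) :
    1 ≤ pquot y (i + 1) :=
  Int.le_floor.2 (by exact_mod_cast (one_lt_cfIter_succ h).le)

section Uniqueness

variable {l₁ l₂ L M : List ℤ} {m₁ m₂ m : ℤ}

lemma length_le_of_cfTail_intCast_eq (hl₁ : ∀ b ∈ l₁.tail, 1 ≤ b) (hl₂ : ∀ b ∈ l₂.tail, 1 ≤ b)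
    (hm₁ : 1 < m₁) (hm₂ : 1 < m₂) (h : cfTail l₁ m₁ = cfTail l₂ m₂) :
    l₁.length ≤ l₂.length := by
  by_contra! hlt
  apply fract_cfIter_cfTail_ne_zero (t := m₁) (by exact_mod_cast hm₁) hl₁ hlt
  rw [h, cfIter_cfTail (by exact_mod_cast hm₂) hl₂ le_rfl, List.drop_length, cfTail_nil,
    Int.fract_intCast]

lemma cfTail_intCast_inj (hl₁ : ∀ b ∈ l₁.tail, 1 ≤ b) (hl₂ : ∀ b ∈ l₂.tail, 1 ≤ b)
    (hm₁ : 1 < m₁) (hm₂ : 1 < m₂) (h : cfTail l₁ m₁ = cfTail l₂ m₂) : l₁ = l₂ ∧ m₁ = m₂ := by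
  have hlen := (length_le_of_cfTail_intCast_eq hl₁ hl₂ hm₁ hm₂ h).antisymm
    (length_le_of_cfTail_intCast_eq hl₂ hl₁ hm₂ hm₁ h.symm)
  have hm₁' : (1 : ℝ) < m₁ := by exact_mod_cast hm₁
  have hm₂' : (1 : ℝ) < m₂ := by exact_mod_cast hm₂
  refine ⟨?_, ?_⟩
  · rw [← map_pquot_cfTail hm₁' hl₁, ← map_pquot_cfTail hm₂' hl₂, h, hlen]
  · have e₁ := cfIter_cfTail hm₁' hl₁ le_rfl
    have e₂ := cfIter_cfTail hm₂' hl₂ le_rfl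
    rw [List.drop_length, cfTail_nil, h, hlen] at e₁
    rw [List.drop_length, cfTail_nil, e₁] at e₂
    exact_mod_cast e₂

lemma cfTail_ne_intCast (hL : ∀ b ∈ L.tail, 1 ≤ b) {t : ℝ} (ht : 1 < t) {c : ℤ} (hc : c ≤ 1) :
    cfTail L t ≠ c := by
  intro h
  obtain _ | ⟨b, L⟩ := L
  · have : (c : ℝ) ≤ 1 := by exact_mod_cast hc
    simp only [cfTail_nil] at h
    linarith
  · exact fract_cfIter_cfTail_ne_zero ht hL (i := 0) (by simp)
      (by rw [cfIter, h, Int.fract_intCast])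

lemma eq_append_or_of_cfEval_eq_cfTail (hM : M ≠ []) (hMt : ∀ b ∈ M.tail, 1 ≤ b)
    (hL : ∀ b ∈ L.tail, 1 ≤ b) (hm : 1 < m) (h : cfEval M = cfTail L m) :
    M = L ++ [m] ∨ M = L ++ [m - 1, 1] := by
  obtain ⟨M, c, rfl⟩ : ∃ M' c, M = M' ++ [c] := by
    obtain h | h := M.eq_nil_or_concat
    · exact absurd h hM
    · simpa using h
  rw [cfEval_append_singleton] at h
  have htail : ∀ b ∈ M.tail, 1 ≤ b := fun b hb => hMt b (by cases M <;> simp_all)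
  obtain hc | hc := lt_or_ge 1 c
  · obtain ⟨rfl, rfl⟩ := cfTail_intCast_inj htail hL hc hm h
    exact .inl rfl
  obtain rfl | hM0 := eq_or_ne M []
  · exact absurd h.symm (cfTail_ne_intCast hL (by exact_mod_cast hm) hc)
  obtain rfl : c = 1 :=
    hc.antisymm (hMt c (by rw [List.tail_append_singleton_of_ne_nil hM0]; simp))
  obtain ⟨M, c, rfl⟩ : ∃ M' c, M = M' ++ [c] := by
    obtain h | h := M.eq_nil_or_concat
    · exact absurd h hM0
    · simpa using h
  have h' : cfTail M ((c + 1 : ℤ) : ℝ) = cfTail L m := by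
    rw [← h, cfTail_append]
    norm_num
  obtain hc | hc := lt_or_ge 1 (c + 1)
  · obtain ⟨rfl, rfl⟩ :=
      cfTail_intCast_inj (fun b hb => htail b (by cases M <;> simp_all)) hL hc hm h'
    exact .inr (by simp)
  obtain rfl | hM1 := eq_or_ne M []
  · exact absurd h'.symm (cfTail_ne_intCast hL (by exact_mod_cast hm) hc)
  have := htail c (by rw [List.tail_append_singleton_of_ne_nil hM1]; simp)
  omega

end Uniqueness

lemma cfStep_nonneg (y : ℝ) : 0 ≤ cfStep y := by
  unfold cfStep
  split_ifs
  exacts [le_rfl, inv_nonneg.2 (Int.fract_nonneg y)]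

lemma pquot_nonneg {x : ℝ} (hx : 0 ≤ x) (n : ℕ) : 0 ≤ pquot x n := by
  refine Int.floor_nonneg.2 ?_
  cases n with
  | zero => exact hx
  | succ n => exact cfStep_nonneg _

lemma one_le_pquot_of_cfIter_ne_zero {y : ℝ} {k : ℕ} (hk : cfIter y k ≠ 0) {i : ℕ} (hi₁ : 1 ≤ i)
    (hi : i ≤ k) : 1 ≤ pquot y i := by
  obtain ⟨j, rfl⟩ := Nat.exists_eq_add_of_le' hi₁
  exact one_le_pquot_succ_s10 (fract_cfIter_ne_zero_of_lt hk (by omega))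

lemma IsCanonCF.cfTail_eq {x : ℝ} {A : ℕ → ℤ} {n : ℕ} (h : IsCanonCF x A n) :
    cfTail ((List.range n).map A) (A n) = x := by
  obtain ⟨hA, hfin, hne⟩ := h
  have hlast : cfIter x n = A n := by
    rw [← hA n le_rfl, pquot, ← sub_eq_zero.1 hfin]
  have hmap : (List.range n).map A = (List.range n).map (pquot x) :=
    List.map_congr_left fun i hi => (hA i (List.mem_range.1 hi).le).symm
  rw [hmap, ← hlast]
  exact cfTail_map_pquot_cfIter hne

lemma IsCanonCF.one_le_of_mem_tail {x : ℝ} {A : ℕ → ℤ} {n : ℕ} (h : IsCanonCF x A n) :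
    ∀ b ∈ ((List.range n).map A).tail, 1 ≤ b := by
  simp only [← List.map_tail, List.tail_range, List.mem_map, List.mem_range'_1]
  rintro b ⟨i, hi, rfl⟩
  obtain ⟨j, rfl⟩ := Nat.exists_eq_add_of_le' hi.1
  exact h.1 (j + 1) (by omega) ▸ one_le_pquot_succ_s10 (h.2.2 j (by omega))

lemma IsCanonCF.nonneg_of_mem {x : ℝ} {A : ℕ → ℤ} {n : ℕ} (h : IsCanonCF x A n) (hx : 0 ≤ x) :
    ∀ b ∈ (List.range n).map A, 0 ≤ b := by
  simp only [List.mem_map, List.mem_range]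
  rintro b ⟨i, hi, rfl⟩
  exact h.1 i hi.le ▸ pquot_nonneg hx i

lemma ra_eq_cfEval_of_pquot {a : ℕ} {y : ℝ} {k : ℕ} (hk : 1 ≤ k) (hak : a ≤ pquot y k)
    (hlt : ∀ i, 1 ≤ i → i < k → pquot y i < a) :
    ra a y = cfEval ((List.range k).map (pquot y)) := by
  have hex : ∃ i, 1 ≤ i ∧ (a : ℤ) ≤ pquot y i := ⟨k, hk, hak⟩
  rw [ra, dif_pos hex,
    (Nat.find_eq_iff hex).2 ⟨⟨hk, hak⟩, fun i hi ⟨hi₁, hai⟩ => (hlt i hi₁ hi).not_ge hai⟩]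

lemma cfTail_strictMonoOn_or_strictAntiOn {l : List ℤ} (hl : ∀ b ∈ l.tail, 1 ≤ b) :
    StrictMonoOn (cfTail l) (Set.Ici 1) ∨ StrictAntiOn (cfTail l) (Set.Ici 1) := by
  induction l with
  | nil => exact .inl strictMonoOn_id
  | cons b l ih =>
    have hl' : ∀ c ∈ l, 1 ≤ c := hl
    have hpos : ∀ s ∈ Set.Ici (1 : ℝ), 0 < cfTail l s := fun s hs =>
      one_pos.trans_le (one_le_cfTail hs hl')
    obtain hmono | hanti := ih fun c hc => hl' c (List.mem_of_mem_tail hc)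
    · refine .inr fun s hs t ht hst => ?_
      simp only [cfTail_cons]
      gcongr
      exacts [hpos s hs, hmono hs ht hst]
    · refine .inl fun s hs t ht hst => ?_
      simp only [cfTail_cons]
      gcongr
      exacts [hpos t ht, hanti hs ht hst]

lemma continuousOn_cfTail {l : List ℤ} (hl : ∀ b ∈ l.tail, 1 ≤ b) :
    ContinuousOn (cfTail l) (Set.Ici 1) := by
  induction l with
  | nil => exact continuousOn_id
  | cons b l ih =>
    have hl' : ∀ c ∈ l, 1 ≤ c := hl
    exact continuousOn_const.add ((ih fun c hc => hl' c (List.mem_of_mem_tail hc)).inv₀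
      fun s hs => (one_pos.trans_le (one_le_cfTail hs hl')).ne')

lemma image_cfTail_pair_one_Ici (c : ℤ) {s : ℝ} (hs : 0 < s) :
    cfTail [c, 1] '' Set.Ici s = Set.Ico (cfTail [c, 1] s) (c + 1) := by
  have hform : ∀ t, 0 < t → cfTail [c, 1] t = c + t / (t + 1) := fun t ht => by
    simp only [cfTail_cons, cfTail_nil, Int.cast_one]
    field_simp
  ext u
  constructor
  · rintro ⟨t, ht : s ≤ t, rfl⟩
    have ht0 : 0 < t := hs.trans_le ht
    rw [hform s hs, hform t ht0]
    refine ⟨?_, ?_⟩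
    · have : s / (s + 1) ≤ t / (t + 1) := by
        rw [div_le_div_iff₀ (by positivity) (by positivity)]
        nlinarith
      linarith
    · have : t / (t + 1) < 1 := (div_lt_one (by positivity)).2 (by linarith)
      linarith
  · rintro ⟨hu₁, hu₂⟩
    rw [hform s hs] at hu₁
    have hv₀ : s / (s + 1) ≤ u - c := by linarith
    have hv₁ : u - c < 1 := by linarith
    have hv : 0 < u - c := lt_of_lt_of_le (by positivity) hv₀
    refine ⟨(u - c) / (1 - (u - c)), ?_, ?_⟩
    · rw [Set.mem_Ici, le_div_iff₀ (by linarith)]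
      rw [div_le_iff₀ (by positivity)] at hv₀
      linarith
    · have h1v : 1 - (u - c) ≠ 0 := by linarith
      have : (u - c) / (1 - (u - c)) / ((u - c) / (1 - (u - c)) + 1) = u - c := by
        field_simp
        ring
      rw [hform _ (div_pos hv (by linarith)), this]
      ring

lemma image_cfTail_Ico {l : List ℤ} (hl : ∀ b ∈ l.tail, 1 ≤ b) {c d : ℝ} (hc : 1 ≤ c)
    (hcd : c < d) :
    (cfTail l d < cfTail l c ∧ cfTail l '' Set.Ico c d = Set.Ioc (cfTail l d) (cfTail l c)) ∨
    (cfTail l c < cfTail l d ∧ cfTail l '' Set.Ico c d = Set.Ico (cfTail l c) (cfTail l d)) := by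
  have hsub : Set.Icc c d ⊆ Set.Ici 1 := fun s hs => hc.trans hs.1
  have hcont := (continuousOn_cfTail hl).mono hsub
  have hc' : c ∈ Set.Ici (1 : ℝ) := hc
  have hd' : d ∈ Set.Ici (1 : ℝ) := hc.trans hcd.le
  obtain hmono | hanti := cfTail_strictMonoOn_or_strictAntiOn hl
  · exact .inr ⟨hmono hc' hd' hcd, hcont.image_Ico_of_strictMonoOn hcd.le (hmono.mono hsub)⟩
  · exact .inl ⟨hanti hc' hd' hcd, hcont.image_Ico_of_strictAntiOn hcd.le (hanti.mono hsub)⟩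

section Transient

variable {a : ℕ} {L : List ℤ}

lemma ra_cfTail (ha : 2 ≤ a) (hL0 : L ≠ []) (hL : ∀ b ∈ L.tail, 1 ≤ b) (hLa : ∀ b ∈ L, b < a)
    {t : ℝ} (ht : a ≤ t) : ra a (cfTail L t) = cfEval L := by
  have ht1 : 1 < t := lt_of_lt_of_le (by exact_mod_cast ha) ht
  rw [ra_eq_cfEval_of_pquot (k := L.length) (List.length_pos_iff.2 hL0), map_pquot_cfTail ht1 hL]
  · rw [pquot, cfIter_cfTail ht1 hL le_rfl, List.drop_length, cfTail_nil]
    exact Int.le_floor.2 (by exact_mod_cast ht)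
  · intro i _ hi
    rw [pquot_cfTail ht1 hL hi]
    exact hLa _ (List.getElem_mem hi)

lemma cfEval_ne_cfTail (hL0 : L ≠ []) (hL : ∀ b ∈ L.tail, 1 ≤ b) {m : ℤ} (hm : 1 < m) :
    cfEval L ≠ cfTail L m := fun h => by
  obtain h | h := eq_append_or_of_cfEval_eq_cfTail hL0 hL hL hm h <;>
    simpa using congrArg List.length h

lemma exists_cfTail_eq_of_ra_eq (ha : 2 ≤ a) (hL0 : L ≠ []) (hL : ∀ b ∈ L.tail, 1 ≤ b)
    (hLa : ∀ b ∈ L, b < a) {y : ℝ} (h : ra a y = cfTail L a) :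
    ∃ t : ℝ, a ≤ t ∧ cfTail (L ++ [(a : ℤ) - 1, 1]) t = y := by
  have hm : (1 : ℤ) < a := by omega
  by_cases hex : ∃ i, 1 ≤ i ∧ (a : ℤ) ≤ pquot y i
  swap
  · have hy : y = cfTail L a := by rw [ra, dif_neg hex] at h; exact h
    subst hy
    have hx := ra_cfTail ha hL0 hL hLa le_rfl
    rw [h] at hx
    exact absurd hx.symm (by simpa using cfEval_ne_cfTail hL0 hL hm)
  rw [ra, dif_pos hex] at h
  set k := Nat.find hex
  obtain ⟨hk, hak⟩ := Nat.find_spec hex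
  have hyk : (a : ℝ) ≤ cfIter y k := by exact_mod_cast Int.le_floor.1 hak
  have hk0 : cfIter y k ≠ 0 := (lt_of_lt_of_le (by exact_mod_cast (by omega : 0 < a)) hyk).ne'
  set M := (List.range k).map (pquot y) with hM
  have hMt : ∀ b ∈ M.tail, 1 ≤ b := by
    rw [hM, ← List.map_tail, List.tail_range]
    simp only [List.mem_map, List.mem_range'_1]
    rintro b ⟨i, hi, rfl⟩
    exact one_le_pquot_of_cfIter_ne_zero hk0 hi.1 (by omega)
  obtain hML | hMP := eq_append_or_of_cfEval_eq_cfTail (by simp [hM]; omega) hMt hL hm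
    (by simpa using h)
  · have hlen := congrArg List.length hML
    have hlast := congrArg (·[L.length]?) hML
    simp only [hM, List.length_map, List.length_range, List.length_append,
      List.length_singleton] at hlen
    simp [hM, hlen] at hlast
    exact absurd ⟨List.length_pos_iff.2 hL0, hlast.ge⟩ (Nat.find_min hex (by omega))
  · exact ⟨cfIter y k, hyk,
      hMP ▸ cfTail_map_pquot_cfIter fun i hi => fract_cfIter_ne_zero_of_lt hk0 hi⟩

lemma cfTail_mem_lockZone (ha : 2 ≤ a) (hL0 : L ≠ []) (hL : ∀ b ∈ L.tail, 1 ≤ b)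
    (hLnn : ∀ b ∈ L, 0 ≤ b) (hLa : ∀ b ∈ L, b < a) {t : ℝ} (ht : a ≤ t) :
    cfTail (L ++ [(a : ℤ) - 1, 1]) t ∈ lockZone a (cfTail L a) := by
  set P := L ++ [(a : ℤ) - 1, 1] with hP
  have hPt : ∀ b ∈ P.tail, 1 ≤ b := by
    rw [hP, List.tail_append_of_ne_nil hL0]
    simp only [List.mem_append, List.mem_cons, List.not_mem_nil, or_false]
    rintro b (hb | rfl | rfl)
    exacts [hL b hb, by omega, le_rfl]
  have hPa : ∀ b ∈ P, b < a := by
    simp only [hP, List.mem_append, List.mem_cons, List.not_mem_nil, or_false]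
    rintro b (hb | rfl | rfl)
    exacts [hLa b hb, by omega, by omega]
  have ht1 : 1 < t := lt_of_lt_of_le (by exact_mod_cast ha) ht
  have hlen : 0 < L.length := List.length_pos_iff.2 hL0
  have hfloor : ⌊cfTail P t⌋ = L[0] :=
    (pquot_cfTail ht1 hPt (i := 0) (by simp [hP])).trans (List.getElem_append_left _)
  have hL₀ := List.getElem_mem hlen
  refine ⟨⟨?_, ?_⟩, ?_⟩
  · exact Int.floor_nonneg.1 (hfloor ▸ hLnn _ hL₀)
  · have hlt := Int.lt_floor_add_one (cfTail P t)
    have : (L[0] : ℝ) + 1 ≤ a := by exact_mod_cast hLa _ hL₀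
    rw [hfloor] at hlt
    linarith
  · rw [ra_cfTail ha (by simp [hP]) hPt hPa ht, hP,
      show L ++ [(a : ℤ) - 1, 1] = (L ++ [(a : ℤ) - 1]) ++ [1] by simp,
      cfEval_append_singleton, cfTail_append]
    norm_num

lemma lockZone_cfTail_eq_image (ha : 2 ≤ a) (hL0 : L ≠ []) (hL : ∀ b ∈ L.tail, 1 ≤ b)
    (hLnn : ∀ b ∈ L, 0 ≤ b) (hLa : ∀ b ∈ L, b < a) :
    lockZone a (cfTail L a) = cfTail L '' Set.Ico (cfTail [(a : ℤ) - 1, 1] a) a := by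
  have hpair := image_cfTail_pair_one_Ici ((a : ℤ) - 1) (s := a) (by positivity)
  push_cast at hpair
  rw [sub_add_cancel] at hpair
  rw [← hpair, Set.image_image]
  ext y
  simp only [← cfTail_append]
  constructor
  · rintro ⟨-, h⟩
    obtain ⟨t, ht, rfl⟩ := exists_cfTail_eq_of_ra_eq ha hL0 hL hLa h
    exact ⟨t, ht, by simp⟩
  · rintro ⟨t, ht, rfl⟩
    simpa using cfTail_mem_lockZone ha hL0 hL hLnn hLa ht

theorem lockZone_cfTail (ha : 2 ≤ a) (hL0 : L ≠ []) (hL : ∀ b ∈ L.tail, 1 ≤ b)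
    (hLnn : ∀ b ∈ L, 0 ≤ b) (hLa : ∀ b ∈ L, b < a) :
    (cfTail L a < cfTail L (cfTail [(a : ℤ) - 1, 1] a) ∧
      lockZone a (cfTail L a) = Set.Ioc (cfTail L a) (cfTail L (cfTail [(a : ℤ) - 1, 1] a))) ∨
    (cfTail L (cfTail [(a : ℤ) - 1, 1] a) < cfTail L a ∧
      lockZone a (cfTail L a) = Set.Ico (cfTail L (cfTail [(a : ℤ) - 1, 1] a)) (cfTail L a)) := by
  have hc₁ : 1 ≤ cfTail [(a : ℤ) - 1, 1] a :=
    one_le_cfTail (by exact_mod_cast (by omega : 1 ≤ a)) (by simp; omega)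
  have hca : cfTail [(a : ℤ) - 1, 1] a < a := by
    have := (image_cfTail_pair_one_Ici ((a : ℤ) - 1) (s := a) (by positivity)).subset
      ⟨a, Set.self_mem_Ici, rfl⟩
    simpa using this.2
  rw [lockZone_cfTail_eq_image ha hL0 hL hLnn hLa]
  exact image_cfTail_Ico hL hc₁ hca

end Transient

theorem stmt_10_general (a : ℕ) (ha : 2 ≤ a) (x : ℚ) (hx0 : 0 < (x : ℝ))
    (n : ℕ) (B : ℕ → ℤ) (hB : IsCanonCF (x : ℝ) B (n + 1))
    (hbd : ∀ i ≤ n, B i ≤ (a : ℤ) - 1) (hlast : B (n + 1) = a) :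
    let w : ℝ := cfEval ((List.range (n + 1)).map B ++ [(a : ℤ) - 1, 1, (a : ℤ)])
    ra a (x : ℝ) = cfEval ((List.range (n + 1)).map B) ∧
    ra a (x : ℝ) ≠ (x : ℝ) ∧
    (((x : ℝ) < w ∧ {y | y ∈ Set.Ico (0 : ℝ) (a : ℝ) ∧ ra a y = (x : ℝ)} = Set.Ioc (x : ℝ) w) ∨
     (w < (x : ℝ) ∧ {y | y ∈ Set.Ico (0 : ℝ) (a : ℝ) ∧ ra a y = (x : ℝ)} = Set.Ico w (x : ℝ))) := by
  intro w
  set L := (List.range (n + 1)).map B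
  have hL0 : L ≠ [] := by simp [L]
  have hL : ∀ b ∈ L.tail, 1 ≤ b := hB.one_le_of_mem_tail
  have hLa : ∀ b ∈ L, b < a := by
    simp only [L, List.mem_map, List.mem_range]
    rintro b ⟨i, hi, rfl⟩
    linarith [hbd i (by omega)]
  have hx : (x : ℝ) = cfTail L a := by
    rw [← hB.cfTail_eq, hlast, Int.cast_natCast]
  have hw : w = cfTail L (cfTail [(a : ℤ) - 1, 1] a) := by
    show cfEval (L ++ [(a : ℤ) - 1, 1, (a : ℤ)]) = _
    rw [show L ++ [(a : ℤ) - 1, 1, (a : ℤ)] = (L ++ [(a : ℤ) - 1, 1]) ++ [(a : ℤ)] by simp,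
      cfEval_append_singleton, cfTail_append, Int.cast_natCast]
  rw [hw, hx, ra_cfTail ha hL0 hL hLa le_rfl]
  exact ⟨rfl, by simpa using cfEval_ne_cfTail hL0 hL (m := a) (by omega),
    lockZone_cfTail ha hL0 hL (hB.nonneg_of_mem hx0.le) hLa⟩

/-- If the canonical expansion of `p/q ∈ (0,a)` is `[a₀; …, aₙ, a]`
with `aᵢ ≤ a - 1` for `i ≤ n`, then `r_a(p/q) = [a₀; …, aₙ] ≠ p/q` and
`{x ∈ [0,a) : r_a(x) = p/q}` is the half-open interval with excluded endpoint `p/q`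
and included endpoint `[a₀; …, aₙ, a-1, 1, a]`. -/
theorem stmt_10 (a : ℕ) (ha : 2 ≤ a) (x : ℚ) (hx0 : 0 < (x : ℝ)) (hxa : (x : ℝ) < a)
    (n : ℕ) (B : ℕ → ℤ) (hB : IsCanonCF (x : ℝ) B (n + 1))
    (hbd : ∀ i ≤ n, B i ≤ (a : ℤ) - 1) (hlast : B (n + 1) = a) :
    let w : ℝ := cfEval ((List.range (n + 1)).map B ++ [(a : ℤ) - 1, 1, (a : ℤ)])
    ra a (x : ℝ) = cfEval ((List.range (n + 1)).map B) ∧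
    ra a (x : ℝ) ≠ (x : ℝ) ∧
    (((x : ℝ) < w ∧ {y | y ∈ Set.Ico (0 : ℝ) (a : ℝ) ∧ ra a y = (x : ℝ)} = Set.Ioc (x : ℝ) w) ∨
     (w < (x : ℝ) ∧ {y | y ∈ Set.Ico (0 : ℝ) (a : ℝ) ∧ ra a y = (x : ℝ)} = Set.Ico w (x : ℝ))) :=
  stmt_10_general a ha x hx0 n B hB hbd hlast
end

section
/- Fix an integer a ≥ 2 and let p/q ∈ (0, a) be a rational number whose canonical continued fraction expansion is [a_0; a_1, …, a_n] with every partial quotient a_i ≤ a − 1. Define the attraction basin 𝒜_a(p/q) = {x ∈ [0, a) : r_a^k(x) = p/q for some integer k ≥ 0}, where r_a^k denotes the k-fold iterate of r_a. Then the supremum and the infimum of 𝒜_a(p/q) are quadratic irrationals; precisely, they are the two real numbers with eventually periodic continued fraction expansions [a_0; a_1, …, a_n, a−1, 1, a−1, 1, …] and [a_0; a_1, …, a_n − 1, 1, a−1, 1, a−1, 1, …] (the block (a−1, 1) repeated indefinitely), one of these being the supremum and the other the infimum. -/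
/-!
Write `τ = [a-1; 1, a-1, 1, …]` and `σ = 1 + 1/τ = [1; a-1, 1, a-1, …]`, and call `z` locked when
its first `n` partial quotients are `A 0, …, A (n-1)` and its `n`-th complete quotient lies in
`[A n - 1 + 1/σ, A n + 1/τ]`. The two ends of this interval are the `n`-th complete quotients of
`y₂` and `y₁`, so locked points lie between `y₁` and `y₂`, and `x` itself is locked.

Locking is pulled back by `r_a`: the preimage of a truncation `[z₀; …, z_N]` is an extension
`[z₀; …, z_N, w]` with `w ≥ a > τ` and `1 ≤ z_j ≤ a - 1`. For such a digit `c`, `c + 1/u ≥ τ` forces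
`c = a - 1` and `u ≤ σ`, while `c + 1/u ≤ σ` forces `c = 1` and `u ≥ τ`; hence replacing the tail
`∞` by `w` keeps every complete quotient on the same side of the gap `(σ, τ)`, and the `n`-th one in
the lock interval. So the whole basin is locked.

Conversely `[A 0; …, A n, a-1, 1, …, a-1, 1, a]` lies in the basin, since each application of `r_a`
strips one period `a-1, 1`, and these points converge to `y₁`; likewise for `y₂`.
-/

namespace ResolutionBasin

/-- `cfApply d j q w = [d j; d (j+1), …, d (j+q-1), w]`. -/
noncomputable def cfApply (d : ℕ → ℤ) (j : ℕ) : ℕ → ℝ → ℝ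
  | 0, w => w
  | q + 1, w => d j + (cfApply d (j + 1) q w)⁻¹

section cfApply

variable {d d' : ℕ → ℤ} {j q : ℕ} {w : ℝ}

@[simp] lemma cfApply_zero (d : ℕ → ℤ) (j : ℕ) (w : ℝ) : cfApply d j 0 w = w := rfl

lemma cfApply_succ (d : ℕ → ℤ) (j q : ℕ) (w : ℝ) :
    cfApply d j (q + 1) w = d j + (cfApply d (j + 1) q w)⁻¹ := rfl

lemma cfApply_add (d : ℕ → ℤ) (p q : ℕ) (j : ℕ) (w : ℝ) :
    cfApply d j (p + q) w = cfApply d j p (cfApply d (j + p) q w) := by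
  induction p generalizing j with
  | zero => simp
  | succ p ih =>
    rw [Nat.add_right_comm, cfApply_succ, ih, cfApply_succ, Nat.add_right_comm j 1 p]
    rfl

lemma cfApply_congr (h : ∀ m, j ≤ m → m < j + q → d m = d' m) :
    cfApply d j q w = cfApply d' j q w := by
  induction q generalizing j with
  | zero => rfl
  | succ q ih =>
    rw [cfApply_succ, cfApply_succ, h j le_rfl (by omega),
      ih fun m h1 h2 => h m (by omega) (by omega)]

lemma cfApply_pos (hw : 0 < w) (hd : ∀ m, j ≤ m → m < j + q → 1 ≤ d m) :
    0 < cfApply d j q w := by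
  induction q generalizing j with
  | zero => exact hw
  | succ q ih =>
    have h1 : (1 : ℝ) ≤ d j := by exact_mod_cast hd j le_rfl (by omega)
    have h2 := ih (j := j + 1) fun m h1 h2 => hd m (by omega) (by omega)
    rw [cfApply_succ]
    linarith [inv_pos.2 h2]

lemma one_lt_cfApply_succ (hw : 0 < w) (hd : ∀ m, j ≤ m → m < j + (q + 1) → 1 ≤ d m) :
    1 < cfApply d j (q + 1) w := by
  have h1 : (1 : ℝ) ≤ d j := by exact_mod_cast hd j le_rfl (by omega)
  have h2 := cfApply_pos (j := j + 1) (q := q) hw fun m h1 h2 => hd m (by omega) (by omega)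
  rw [cfApply_succ]
  linarith [inv_pos.2 h2]

lemma one_lt_cfApply (hw : 1 < w) (hd : ∀ m, j ≤ m → m < j + q → 1 ≤ d m) :
    1 < cfApply d j q w := by
  cases q with
  | zero => exact hw
  | succ q => exact one_lt_cfApply_succ (by linarith) hd

lemma one_le_cfApply (hw : 1 ≤ w) (hd : ∀ m, j ≤ m → m < j + q → 1 ≤ d m) :
    1 ≤ cfApply d j q w := by
  cases q with
  | zero => exact hw
  | succ q => exact (one_lt_cfApply_succ (by linarith) hd).le

end cfApply

lemma cfEval_cons_of_ne_nil (c : ℤ) {l : List ℤ} (hl : l ≠ []) :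
    cfEval (c :: l) = c + (cfEval l)⁻¹ := by
  obtain ⟨b, l, rfl⟩ := List.exists_cons_of_ne_nil hl
  rfl

lemma cfEval_map_range (d : ℕ → ℤ) (q j : ℕ) :
    cfEval ((List.range (q + 1)).map fun m => d (j + m)) = cfApply d j q (d (j + q)) := by
  induction q generalizing j with
  | zero => simp [cfEval]
  | succ q ih =>
    rw [List.range_succ_eq_map, List.map_cons, List.map_map,
      cfEval_cons_of_ne_nil _ (by simp)]
    have hfun : ((fun m => d (j + m)) ∘ Nat.succ) = fun m => d (j + 1 + m) := by
      funext m; simp only [Function.comp, Nat.succ_eq_add_one]; ring_nf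
    rw [hfun, ih, cfApply_succ, Nat.add_zero, Nat.add_right_comm, Nat.add_assoc]

section cfIter

variable {z w : ℝ} {d : ℕ → ℤ} {j p : ℕ}

@[simp] lemma cfIter_zero (x : ℝ) : cfIter x 0 = x := rfl

lemma cfIter_eq_iterate (x : ℝ) (k : ℕ) : cfIter x k = cfStep^[k] x := by
  induction k with
  | zero => rfl
  | succ k ih => rw [Function.iterate_succ_apply', ← ih]; rfl

lemma cfIter_add (x : ℝ) (m k : ℕ) : cfIter x (m + k) = cfIter (cfIter x m) k := by
  simp only [cfIter_eq_iterate, Nat.add_comm m k, Function.iterate_add_apply]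

lemma pquot_add (x : ℝ) (m k : ℕ) : pquot x (m + k) = pquot (cfIter x m) k := by
  rw [pquot, pquot, cfIter_add]

lemma cfStep_intCast (c : ℤ) : cfStep c = 0 := by
  rw [cfStep, if_pos (Int.fract_intCast c)]

lemma cfIter_intCast_of_pos (c : ℤ) {k : ℕ} (hk : 0 < k) : cfIter c k = 0 := by
  induction k with
  | zero => omega
  | succ k ih =>
    rcases Nat.eq_zero_or_pos k with rfl | hk
    · exact cfStep_intCast c
    · rw [cfIter, ih hk]; exact_mod_cast cfStep_intCast 0

lemma cfIter_eq_zero_of_le (h : cfIter z j = 0) {m : ℕ} (hm : j ≤ m) : cfIter z m = 0 := by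
  obtain ⟨k, rfl⟩ := Nat.exists_eq_add_of_le hm
  rw [cfIter_add, h]
  rcases Nat.eq_zero_or_pos k with rfl | hk
  · rfl
  · exact_mod_cast cfIter_intCast_of_pos 0 hk

lemma cfIter_eq_zero_of_intCast {c : ℤ} (h : cfIter z j = c) {m : ℕ} (hm : j < m) :
    cfIter z m = 0 := by
  obtain ⟨k, rfl⟩ := Nat.exists_eq_add_of_lt hm
  rw [Nat.add_assoc, cfIter_add, h]
  exact cfIter_intCast_of_pos c (by omega)

lemma floor_intCast_add_inv (c : ℤ) {u : ℝ} (hu : 1 < u) : ⌊(c : ℝ) + u⁻¹⌋ = c := by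
  rw [Int.floor_intCast_add, Int.floor_eq_zero_iff.2 ⟨(inv_pos.2 (by linarith)).le,
    inv_lt_one_of_one_lt₀ hu⟩, add_zero]

lemma cfStep_intCast_add_inv (c : ℤ) {u : ℝ} (hu : 1 < u) : cfStep (c + u⁻¹) = u := by
  have hfract : Int.fract ((c : ℝ) + u⁻¹) = u⁻¹ := by
    rw [Int.fract_intCast_add, Int.fract_eq_self.2 ⟨(inv_pos.2 (by linarith)).le,
      inv_lt_one_of_one_lt₀ hu⟩]
  rw [cfStep, hfract, if_neg (inv_ne_zero (by linarith)), inv_inv]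

lemma cfIter_succ_ne_zero (h : Int.fract (cfIter z j) ≠ 0) : cfIter z (j + 1) ≠ 0 := by
  rw [cfIter, cfStep, if_neg h]
  exact inv_ne_zero h

lemma cfIter_eq_pquot_add_inv (h : cfIter z (j + 1) ≠ 0) :
    cfIter z j = pquot z j + (cfIter z (j + 1))⁻¹ ∧ 1 < cfIter z (j + 1) := by
  have hfr : Int.fract (cfIter z j) ≠ 0 := fun h0 => h (by rw [cfIter, cfStep, if_pos h0])
  have hstep : cfIter z (j + 1) = (Int.fract (cfIter z j))⁻¹ := by
    rw [cfIter, cfStep, if_neg hfr]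
  refine ⟨?_, ?_⟩
  · rw [hstep, inv_inv, pquot, Int.floor_add_fract]
  · rw [hstep]
    exact (one_lt_inv₀ ((Int.fract_nonneg _).lt_of_ne' hfr)).2 (Int.fract_lt_one _)

lemma one_le_pquot {i m : ℕ} (h : cfIter z i ≠ 0) (h1 : 1 ≤ m) (hm : m ≤ i) : 1 ≤ pquot z m := by
  obtain ⟨k, rfl⟩ : ∃ k, m = k + 1 := ⟨m - 1, by omega⟩
  have hne : cfIter z (k + 1) ≠ 0 := fun h0 => h (cfIter_eq_zero_of_le h0 hm)
  exact Int.le_floor.2 (by exact_mod_cast (cfIter_eq_pquot_add_inv hne).2.le)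

lemma cfIter_eq_cfApply (q : ℕ) (h : cfIter z (j + q) ≠ 0) :
    cfIter z j = cfApply (pquot z) j q (cfIter z (j + q)) := by
  induction q generalizing j with
  | zero => rfl
  | succ q ih =>
    have hne : cfIter z (j + 1) ≠ 0 := fun h0 => h (cfIter_eq_zero_of_le h0 (by omega))
    rw [(cfIter_eq_pquot_add_inv hne).1, cfApply_succ, ih (by rwa [Nat.add_right_comm]),
      Nat.add_right_comm, Nat.add_assoc]

lemma cfIter_cfApply_of_lt (hw : 0 < w) (hd : ∀ m, 1 ≤ m → m < p → 1 ≤ d m) (hj : j < p) :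
    cfIter (cfApply d 0 p w) j = cfApply d j (p - j) w := by
  induction j with
  | zero => rfl
  | succ j ih =>
    obtain ⟨q, hq⟩ : ∃ q, p - (j + 1) = q + 1 := ⟨p - (j + 2), by omega⟩
    rw [cfIter, ih (by omega), show p - j = p - (j + 1) + 1 by omega, cfApply_succ, hq,
      cfStep_intCast_add_inv _ (one_lt_cfApply_succ hw fun m h1 h2 => hd m (by omega) (by omega))]

lemma cfIter_cfApply (hw : 1 < w) (hd : ∀ m, 1 ≤ m → m < p → 1 ≤ d m) (hj : j ≤ p) :
    cfIter (cfApply d 0 p w) j = cfApply d j (p - j) w := by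
  rcases hj.lt_or_eq with hj | rfl
  · exact cfIter_cfApply_of_lt (by linarith) hd hj
  · cases j with
    | zero => rfl
    | succ k =>
      rw [cfIter, cfIter_cfApply_of_lt (by linarith) hd (by omega),
        show k + 1 - k = 0 + 1 by omega, cfApply_succ, cfApply_zero,
        cfStep_intCast_add_inv _ hw, Nat.sub_self, cfApply_zero]

lemma pquot_cfApply (hw : 1 < w) (hd : ∀ m, 1 ≤ m → m < p → 1 ≤ d m) (hj : j < p) :
    pquot (cfApply d 0 p w) j = d j := by
  rw [pquot, cfIter_cfApply hw hd hj.le, show p - j = p - (j + 1) + 1 by omega, cfApply_succ,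
    floor_intCast_add_inv _ (one_lt_cfApply hw fun m h1 h2 => hd m (by omega) (by omega))]

/-- `[d 0; …, d p]` is not canonical when `d p = 1`; the Gauss algorithm still reads off the
given partial quotients as long as it has not terminated. -/
lemma cfIter_cfApply_last_of_ne_zero (hd : ∀ m, 1 ≤ m → m ≤ p → 1 ≤ d m)
    (h : cfIter (cfApply d 0 p (d p)) j ≠ 0) :
    j ≤ p ∧ cfIter (cfApply d 0 p (d p)) j = cfApply d j (p - j) (d p) := by
  have hd' : ∀ m, 1 ≤ m → m < p → 1 ≤ d m := fun m h1 h2 => hd m h1 h2.le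
  rcases lt_or_ge j p with hj | hj
  · have hc0 : (0 : ℝ) < d p := by exact_mod_cast hd p (by omega) le_rfl
    exact ⟨hj.le, cfIter_cfApply_of_lt hc0 hd' hj⟩
  by_cases hcp : 1 < d p ∨ p = 0
  · have hp : cfIter (cfApply d 0 p (d p)) p = d p := by
      rcases hcp with hc1 | hp0
      · rw [cfIter_cfApply (by exact_mod_cast hc1) hd' le_rfl, Nat.sub_self, cfApply_zero]
      · subst hp0; rfl
    rcases hj.lt_or_eq with hj | rfl
    · exact absurd (cfIter_eq_zero_of_intCast hp hj) h
    · exact ⟨le_rfl, by rw [hp, Nat.sub_self, cfApply_zero]⟩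
  · obtain ⟨k, rfl⟩ : ∃ k, p = k + 1 := ⟨p - 1, by omega⟩
    have hc1 : d (k + 1) = 1 := by have := hd (k + 1) (by omega) le_rfl; omega
    have hk : cfIter (cfApply d 0 (k + 1) (d (k + 1))) k = ((d k + 1 : ℤ) : ℝ) := by
      rw [cfIter_cfApply_of_lt (by rw [hc1]; norm_num) hd' (by omega),
        show k + 1 - k = 0 + 1 by omega, cfApply_succ, cfApply_zero, hc1]
      push_cast; simp
    exact absurd (cfIter_eq_zero_of_intCast hk (by omega)) h

lemma pquot_cfApply_last_of_ne_zero (hd : ∀ m, 1 ≤ m → m ≤ p → 1 ≤ d m)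
    (h : cfIter (cfApply d 0 p (d p)) (j + 1) ≠ 0) : pquot (cfApply d 0 p (d p)) j = d j := by
  have hj : cfIter (cfApply d 0 p (d p)) j ≠ 0 := fun h0 => h (cfIter_eq_zero_of_le h0 j.le_succ)
  obtain ⟨hjp, e1⟩ := cfIter_cfApply_last_of_ne_zero hd h
  obtain ⟨-, e0⟩ := cfIter_cfApply_last_of_ne_zero hd hj
  have hgauss := (cfIter_eq_pquot_add_inv h).1
  rw [e0, e1, show p - j = p - (j + 1) + 1 by omega, cfApply_succ, add_left_inj] at hgauss
  exact_mod_cast hgauss.symm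

end cfIter

/-- The quadratic irrational `τ = [a-1; 1, a-1, 1, …]`, the larger root of
`τ² = (a-1)(τ+1)`. -/
noncomputable def tau (a : ℕ) : ℝ := ((a - 1) + √((a - 1) * (a + 3))) / 2

/-- `σ = [1; a-1, 1, a-1, …]`. -/
noncomputable def sigma (a : ℕ) : ℝ := 1 + (tau a)⁻¹

/-- The partial quotients `a-1, 1, a-1, 1, …` of `τ`. -/
def zigzag (a k : ℕ) : ℤ := if Even k then (a : ℤ) - 1 else 1

section tau

variable {a : ℕ}

lemma tau_sq (ha : 2 ≤ a) : tau a ^ 2 = (a - 1) * (tau a + 1) := by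
  have haR : (2 : ℝ) ≤ a := by exact_mod_cast ha
  have h := Real.sq_sqrt (show (0 : ℝ) ≤ (a - 1) * (a + 3) by nlinarith)
  rw [tau]
  nlinarith

lemma sub_one_lt_tau (ha : 2 ≤ a) : (a : ℝ) - 1 < tau a := by
  have haR : (2 : ℝ) ≤ a := by exact_mod_cast ha
  have h : (a : ℝ) - 1 < √((a - 1) * (a + 3)) := Real.lt_sqrt_of_sq_lt (by nlinarith)
  rw [tau]; linarith

lemma tau_lt (ha : 2 ≤ a) : tau a < a := by
  have haR : (2 : ℝ) ≤ a := by exact_mod_cast ha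
  have h : √((a - 1) * (a + 3)) < (a : ℝ) + 1 := (Real.sqrt_lt' (by linarith)).2 (by nlinarith)
  rw [tau]; linarith

lemma one_lt_tau (ha : 2 ≤ a) : 1 < tau a := by
  have haR : (2 : ℝ) ≤ a := by exact_mod_cast ha
  linarith [sub_one_lt_tau ha]

lemma one_lt_sigma (ha : 2 ≤ a) : 1 < sigma a := by
  rw [sigma]; linarith [inv_pos.2 (zero_lt_one.trans (one_lt_tau ha))]

lemma sigma_lt_two (ha : 2 ≤ a) : sigma a < 2 := by
  rw [sigma]; linarith [inv_lt_one_of_one_lt₀ (one_lt_tau ha)]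

lemma tau_eq (ha : 2 ≤ a) : tau a = (a - 1) + (sigma a)⁻¹ := by
  have h1 := one_lt_tau ha
  have h2 := tau_sq ha
  rw [sigma]
  field_simp
  nlinarith

lemma cfIter_tau (ha : 2 ≤ a) (k : ℕ) :
    cfIter (tau a) k = if Even k then tau a else sigma a := by
  induction k with
  | zero => rfl
  | succ k ih =>
    rw [cfIter, ih]
    by_cases hk : Even k
    · rw [if_pos hk, if_neg (Nat.not_even_iff_odd.2 hk.add_one)]
      conv_lhs => rw [tau_eq ha]
      exact_mod_cast cfStep_intCast_add_inv ((a : ℤ) - 1) (one_lt_sigma ha)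
    · rw [if_neg hk, if_pos (Nat.not_even_iff_odd.1 hk).add_one, sigma]
      exact_mod_cast cfStep_intCast_add_inv 1 (one_lt_tau ha)

lemma pquot_tau (ha : 2 ≤ a) (k : ℕ) : pquot (tau a) k = zigzag a k := by
  rw [pquot, cfIter_tau ha, zigzag]
  split_ifs
  · rw [tau_eq ha]
    exact_mod_cast floor_intCast_add_inv ((a : ℤ) - 1) (one_lt_sigma ha)
  · rw [sigma]
    exact_mod_cast floor_intCast_add_inv 1 (one_lt_tau ha)

lemma irrational_tau (ha : 2 ≤ a) : Irrational (tau a) := by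
  have hD : (((a - 1) * (a + 3) : ℕ) : ℝ) = ((a : ℝ) - 1) * (a + 3) := by
    push_cast [Nat.cast_sub (by omega : 1 ≤ a)]; ring
  have hsq : ¬IsSquare ((a - 1) * (a + 3)) := by
    -- `a² < (a-1)(a+3) < (a+1)²`
    rintro ⟨r, hr⟩
    refine Nat.not_exists_sq' (m := a) (n := (a - 1) * (a + 3)) ?_ ?_ ⟨r, by rw [hr, sq]⟩
    all_goals
      obtain ⟨b, rfl⟩ : ∃ b, a = b + 2 := ⟨a - 2, by omega⟩
      rw [show b + 2 - 1 = b + 1 by omega]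
      ring_nf; omega
  have hirr := irrational_sqrt_natCast_iff.2 hsq
  rw [hD] at hirr
  have : tau a = (((a - 1 : ℤ) : ℝ) + √((a - 1) * (a + 3))) / (2 : ℕ) := by
    rw [tau]; push_cast; ring
  rw [this]
  exact (hirr.intCast_add _).div_natCast two_ne_zero

end tau

def IsQuadraticIrrational (y : ℝ) : Prop :=
  Irrational y ∧ ∃ c b d : ℤ, c ≠ 0 ∧ (c : ℝ) * y ^ 2 + b * y + d = 0

namespace IsQuadraticIrrational

variable {y : ℝ}

lemma intCast_add (hy : IsQuadraticIrrational y) (k : ℤ) : IsQuadraticIrrational (k + y) := by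
  obtain ⟨hirr, c, b, d, hc, h⟩ := hy
  refine ⟨hirr.intCast_add k, c, b - 2 * c * k, c * k ^ 2 - b * k + d, hc, ?_⟩
  push_cast
  linear_combination h

lemma inv (hy : IsQuadraticIrrational y) : IsQuadraticIrrational y⁻¹ := by
  obtain ⟨hirr, c, b, d, hc, h⟩ := hy
  have hy0 : y ≠ 0 := by exact_mod_cast hirr.ne_int 0
  have hd : d ≠ 0 := by
    rintro rfl
    refine hirr ⟨-b / c, ?_⟩
    have hcR : (c : ℝ) ≠ 0 := by exact_mod_cast hc
    have : (c : ℝ) * y + b = 0 := by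
      apply (mul_eq_zero.1 (by linear_combination h : y * ((c : ℝ) * y + b) = 0)).resolve_left hy0
    push_cast
    field_simp
    linarith
  refine ⟨hirr.inv, d, b, c, hd, ?_⟩
  field_simp
  linear_combination h

end IsQuadraticIrrational

lemma isQuadraticIrrational_tau {a : ℕ} (ha : 2 ≤ a) : IsQuadraticIrrational (tau a) :=
  ⟨irrational_tau ha, 1, -((a : ℤ) - 1), -((a : ℤ) - 1), one_ne_zero, by
    push_cast; linear_combination tau_sq ha⟩

lemma IsQuadraticIrrational.cfApply {w : ℝ} (hw : IsQuadraticIrrational w) (d : ℕ → ℤ)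
    (j q : ℕ) : IsQuadraticIrrational (cfApply d j q w) := by
  induction q generalizing j with
  | zero => exact hw
  | succ q ih => exact (ih (j + 1)).inv.intCast_add (d j)

section contraction

variable {d : ℕ → ℤ} {j q : ℕ} {u v : ℝ}

lemma abs_inv_sub_inv_le {U V : ℝ} (hU : 1 ≤ U) (hV : 1 ≤ V) : |U⁻¹ - V⁻¹| ≤ |U - V| := by
  have hUV : 1 ≤ U * V := by nlinarith
  rw [inv_sub_inv (by positivity) (by positivity), abs_div, abs_sub_comm,
    abs_of_pos (by positivity : 0 < U * V)]
  exact div_le_self (abs_nonneg _) hUV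

lemma abs_cfApply_sub_le (hu : 1 ≤ u) (hv : 1 ≤ v) (hd : ∀ m, j < m → m < j + q → 1 ≤ d m) :
    |cfApply d j q u - cfApply d j q v| ≤ |u - v| := by
  induction q generalizing j with
  | zero => exact le_rfl
  | succ q ih =>
    have hd' : ∀ m, j + 1 ≤ m → m < j + 1 + q → 1 ≤ d m := fun m h1 h2 => hd m (by omega) (by omega)
    rw [cfApply_succ, cfApply_succ, add_sub_add_left_eq_sub]
    exact (abs_inv_sub_inv_le (one_le_cfApply hu hd') (one_le_cfApply hv hd')).trans
      (ih fun m h1 h2 => hd m (by omega) (by omega))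

/-- `[c; e, u] - [c; e, v] = (u - v) / ((e u + 1)(e v + 1))`, and the denominator is `≥ 4`. -/
lemma abs_cfApply_two_sub_le (hu : 1 ≤ u) (hv : 1 ≤ v) (hd : 1 ≤ d (j + 1)) :
    |cfApply d j 2 u - cfApply d j 2 v| ≤ |u - v| / 4 := by
  have he : (1 : ℝ) ≤ d (j + 1) := by exact_mod_cast hd
  set e : ℝ := (d (j + 1) : ℝ)
  have hu' : 2 ≤ e * u + 1 := by nlinarith
  have hv' : 2 ≤ e * v + 1 := by nlinarith
  have key : cfApply d j 2 u - cfApply d j 2 v = (u - v) / ((e * u + 1) * (e * v + 1)) := by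
    simp only [cfApply_succ, cfApply_zero]
    field_simp
    ring
  have hprod : 4 ≤ (e * u + 1) * (e * v + 1) := by nlinarith
  rw [key, abs_div, abs_of_pos (by linarith : (0 : ℝ) < (e * u + 1) * (e * v + 1))]
  exact div_le_div_of_nonneg_left (abs_nonneg _) (by norm_num) hprod

end contraction

section zigzagTail

variable {a : ℕ} {d : ℕ → ℤ} {m : ℕ}

lemma digit_mem_of_zigzag (ha : 2 ≤ a) (hper : ∀ k, d (m + k) = zigzag a k) {i : ℕ}
    (hi : m ≤ i) : 1 ≤ d i ∧ d i ≤ a - 1 := by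
  obtain ⟨k, rfl⟩ := Nat.exists_eq_add_of_le hi
  rw [hper, zigzag]; split_ifs <;> omega

lemma eq_sub_one_of_zigzag (hper : ∀ k, d (m + k) = zigzag a k) (k : ℕ) :
    d (m + 2 * k) = (a : ℤ) - 1 := by
  rw [hper, zigzag, if_pos (even_two_mul k)]

lemma eq_one_of_zigzag (hper : ∀ k, d (m + k) = zigzag a k) (k : ℕ) : d (m + 2 * k + 1) = 1 := by
  rw [Nat.add_assoc, hper, zigzag, if_neg (Nat.not_even_iff_odd.2 (odd_two_mul_add_one k))]

lemma cfApply_zigzag_two (hper : ∀ k, d (m + k) = zigzag a k) (k : ℕ) (w : ℝ) :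
    cfApply d (m + 2 * k) 2 w = (a - 1) + (1 + w⁻¹)⁻¹ := by
  simp only [cfApply_succ, cfApply_zero, eq_sub_one_of_zigzag hper, eq_one_of_zigzag hper]
  push_cast
  ring

lemma cfApply_zigzag_two_tau (ha : 2 ≤ a) (hper : ∀ k, d (m + k) = zigzag a k) (k : ℕ) :
    cfApply d (m + 2 * k) 2 (tau a) = tau a := by
  rw [cfApply_zigzag_two hper]
  conv_rhs => rw [tau_eq ha]
  rfl

lemma cfApply_zigzag_tau (ha : 2 ≤ a) (hper : ∀ k, d (m + k) = zigzag a k) (k : ℕ) :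
    cfApply d m (2 * k) (tau a) = tau a := by
  induction k with
  | zero => rfl
  | succ k ih => rw [Nat.mul_succ, cfApply_add, cfApply_zigzag_two_tau ha hper, ih]

lemma abs_cfApply_zigzag_sub_tau_le (ha : 2 ≤ a) (hper : ∀ k, d (m + k) = zigzag a k)
    {w : ℝ} (hw : 1 ≤ w) (k : ℕ) :
    |cfApply d m (2 * k) w - tau a| ≤ |w - tau a| / 4 ^ k := by
  have hd : ∀ i, m ≤ i → 1 ≤ d i := fun i hi => (digit_mem_of_zigzag ha hper hi).1
  induction k generalizing w with
  | zero => simp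
  | succ k ih =>
    have hw2 : 1 ≤ cfApply d (m + 2 * k) 2 w :=
      one_le_cfApply hw fun i h1 _ => hd i (by omega)
    rw [Nat.mul_succ, cfApply_add]
    calc |cfApply d m (2 * k) (cfApply d (m + 2 * k) 2 w) - tau a|
        ≤ |cfApply d (m + 2 * k) 2 w - tau a| / 4 ^ k := ih hw2
      _ = |cfApply d (m + 2 * k) 2 w - cfApply d (m + 2 * k) 2 (tau a)| / 4 ^ k := by
          rw [cfApply_zigzag_two_tau ha hper]
      _ ≤ |w - tau a| / 4 / 4 ^ k := by
          gcongr
          exact abs_cfApply_two_sub_le hw (one_lt_tau ha).le (hd _ (by omega))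
      _ = |w - tau a| / 4 ^ (k + 1) := by ring

lemma tendsto_cfApply_zigzag (ha : 2 ≤ a) (hper : ∀ k, d (m + k) = zigzag a k)
    (hd : ∀ i, 1 ≤ i → i < m → 1 ≤ d i) {w : ℝ} (hw : 1 ≤ w) :
    Filter.Tendsto (fun k => cfApply d 0 (m + 2 * k) w) Filter.atTop
      (nhds (cfApply d 0 m (tau a))) := by
  have hbound : ∀ k, ‖cfApply d 0 (m + 2 * k) w - cfApply d 0 m (tau a)‖ ≤
      |w - tau a| * (1 / 4) ^ k := by
    intro k
    have hd' : ∀ i, 0 < i → i < 0 + m → 1 ≤ d i := fun i h1 h2 => hd i h1 (by omega)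
    have htau : 1 ≤ tau a := (one_lt_tau ha).le
    have hw' : 1 ≤ cfApply d m (2 * k) w :=
      one_le_cfApply hw fun i h1 _ => (digit_mem_of_zigzag ha hper h1).1
    calc ‖cfApply d 0 (m + 2 * k) w - cfApply d 0 m (tau a)‖
        = |cfApply d 0 m (cfApply d m (2 * k) w) -
            cfApply d 0 m (cfApply d m (2 * k) (tau a))| := by
          rw [Real.norm_eq_abs, cfApply_add, Nat.zero_add, cfApply_zigzag_tau ha hper]
      _ ≤ |cfApply d m (2 * k) w - tau a| := by
          rw [cfApply_zigzag_tau ha hper]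
          exact abs_cfApply_sub_le hw' htau hd'
      _ ≤ |w - tau a| * (1 / 4) ^ k := by
          rw [one_div_pow, ← div_eq_mul_one_div]
          exact abs_cfApply_zigzag_sub_tau_le ha hper hw k
  rw [tendsto_iff_norm_sub_tendsto_zero]
  refine squeeze_zero (fun _ => norm_nonneg _) hbound ?_
  simpa using (tendsto_pow_atTop_nhds_zero_of_lt_one (by norm_num : (0 : ℝ) ≤ 1 / 4)
    (by norm_num)).const_mul |w - tau a|

end zigzagTail

/-- The interval from `[b-1; 1, a-1, 1, a-1, …]` to `[b; a-1, 1, a-1, 1, …]`. -/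
def lockInterval (a : ℕ) (b : ℤ) : Set ℝ := Set.Icc (b - 1 + (sigma a)⁻¹) (b + (tau a)⁻¹)

def KeepsSide (a : ℕ) (u v : ℝ) : Prop := (tau a ≤ u → tau a ≤ v) ∧ (u ≤ sigma a → v ≤ sigma a)

section keepsSide

variable {a : ℕ} {c b : ℤ} {u v w : ℝ}

lemma keepsSide_intCast_add_inv (ha : 2 ≤ a) (hc : 1 ≤ c) (hca : c ≤ a - 1) (hw : tau a ≤ w) :
    KeepsSide a c (c + w⁻¹) := by
  have hcR : (c : ℝ) ≤ a - 1 := by exact_mod_cast hca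
  refine ⟨fun h => absurd h (not_le.2 (hcR.trans_lt (sub_one_lt_tau ha))), fun h => ?_⟩
  have hc1 : c = 1 := by
    have : (c : ℝ) < 2 := h.trans_lt (sigma_lt_two ha)
    have : c < 2 := by exact_mod_cast this
    omega
  have htau := one_lt_tau ha
  rw [hc1, sigma, Int.cast_one]
  linarith [inv_anti₀ (by linarith) hw]

lemma KeepsSide.intCast_add_inv (ha : 2 ≤ a) (h : KeepsSide a u v) (hc : 1 ≤ c) (hca : c ≤ a - 1)
    (hu : 1 ≤ u) (hv : 0 < v) : KeepsSide a (c + u⁻¹) (c + v⁻¹) := by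
  have htau := one_lt_tau ha
  have hsigma := one_lt_sigma ha
  have hu0 : 0 < u := by linarith
  have hinvu : u⁻¹ ≤ 1 := inv_le_one_of_one_le₀ hu
  have hteq := tau_eq ha
  constructor
  · intro hle
    have hc' : c = a - 1 := by
      have : (a : ℝ) - 2 < c := by linarith [sub_one_lt_tau ha]
      have : (a : ℤ) - 2 < c := by exact_mod_cast this
      omega
    have hcR : (c : ℝ) = a - 1 := by rw [hc']; push_cast; ring
    have hus : u ≤ sigma a := (inv_le_inv₀ (by linarith) hu0).1 (by linarith)
    linarith [inv_anti₀ hv (h.2 hus)]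
  · intro hle
    have hc' : c = 1 := by
      have : (c : ℝ) < 2 := by linarith [inv_pos.2 hu0, sigma_lt_two ha]
      have : c < 2 := by exact_mod_cast this
      omega
    rw [hc', Int.cast_one, sigma] at hle ⊢
    have htu : tau a ≤ u := (inv_le_inv₀ hu0 (by linarith)).1 (by linarith)
    linarith [inv_anti₀ (by linarith) (h.1 htu)]

lemma KeepsSide.cfApply (ha : 2 ≤ a) (h : KeepsSide a u v) {d : ℕ → ℤ} {j q : ℕ}
    (hd : ∀ m, j ≤ m → m < j + q → 1 ≤ d m ∧ d m ≤ a - 1) (hu : 1 ≤ u) (hv : 1 ≤ v) :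
    KeepsSide a (cfApply d j q u) (cfApply d j q v) := by
  induction q generalizing j with
  | zero => exact h
  | succ q ih =>
    have hd' : ∀ m, j + 1 ≤ m → m < j + 1 + q → 1 ≤ d m := fun m h1 h2 =>
      (hd m (by omega) (by omega)).1
    exact (ih fun m h1 h2 => hd m (by omega) (by omega)).intCast_add_inv ha
      (hd j le_rfl (by omega)).1 (hd j le_rfl (by omega)).2 (one_le_cfApply hu hd')
      (zero_lt_one.trans_le (one_le_cfApply hv hd'))

lemma KeepsSide.add_inv_mem_lockInterval (ha : 2 ≤ a) (h : KeepsSide a u v) (hu : 1 ≤ u)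
    (hv : 1 ≤ v) (hmem : c + u⁻¹ ∈ lockInterval a b) : c + v⁻¹ ∈ lockInterval a b := by
  obtain ⟨hlo, hhi⟩ := hmem
  have htau := one_lt_tau ha
  have hsigma := one_lt_sigma ha
  have hu0 : 0 < u := by linarith
  have hv0 : 0 < v := by linarith
  have hinvu : u⁻¹ ≤ 1 := inv_le_one_of_one_le₀ hu
  have hinvv : v⁻¹ ≤ 1 := inv_le_one_of_one_le₀ hv
  have hsig : (sigma a)⁻¹ < 1 := inv_lt_one_of_one_lt₀ hsigma
  have htinv : 0 < (tau a)⁻¹ := inv_pos.2 (by linarith)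
  have hcb : c = b ∨ c = b - 1 := by
    have h1 : (c : ℝ) < b + 1 := by linarith [inv_lt_one_of_one_lt₀ htau, inv_pos.2 hu0]
    have h2 : (b : ℝ) - 2 < c := by linarith [inv_pos.2 (zero_lt_one.trans hsigma)]
    have h1' : c < b + 1 := by exact_mod_cast h1
    have h2' : b - 2 < c := by exact_mod_cast h2
    omega
  rcases hcb with rfl | rfl
  · have htu : tau a ≤ u := (inv_le_inv₀ hu0 (by linarith)).1 (by linarith)
    have := inv_anti₀ (by linarith) (h.1 htu)
    constructor <;> linarith [inv_pos.2 hv0]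
  · push_cast at hlo hhi ⊢
    have hus : u ≤ sigma a := (inv_le_inv₀ (by linarith) hu0).1 (by linarith)
    have := inv_anti₀ hv0 (h.2 hus)
    constructor <;> linarith

lemma intCast_add_inv_mem_lockInterval (ha : 2 ≤ a) (hmem : (c : ℝ) ∈ lockInterval a b)
    (hw : tau a ≤ w) : c + w⁻¹ ∈ lockInterval a b := by
  obtain ⟨hlo, hhi⟩ := hmem
  have htau := one_lt_tau ha
  have hcb : c = b := by
    have h1 : (c : ℝ) < b + 1 := by linarith [inv_lt_one_of_one_lt₀ htau]
    have h2 : (b : ℝ) - 1 < c := by linarith [inv_pos.2 (zero_lt_one.trans (one_lt_sigma ha))]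
    have h1' : c < b + 1 := by exact_mod_cast h1
    have h2' : b - 1 < c := by exact_mod_cast h2
    omega
  subst hcb
  have hw0 : 0 < w := by linarith
  constructor <;> linarith [inv_anti₀ (by linarith) hw, inv_pos.2 hw0,
    inv_lt_one_of_one_lt₀ (one_lt_sigma ha)]

/-- This is the step undoing `r_a`, which appends a complete quotient `w ≥ a > τ` after partial
quotients in `[1, a-1]`. -/
lemma cfApply_succ_mem_lockInterval (ha : 2 ≤ a) {d : ℕ → ℤ} {j q : ℕ}
    (hd : ∀ m, j < m → m ≤ j + q → 1 ≤ d m ∧ d m ≤ a - 1) (hw : tau a ≤ w)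
    (hmem : cfApply d j q (d (j + q)) ∈ lockInterval a b) :
    cfApply d j (q + 1) w ∈ lockInterval a b := by
  cases q with
  | zero => exact intCast_add_inv_mem_lockInterval ha hmem hw
  | succ q =>
    have hlast := hd (j + 1 + q) (by omega) (by omega)
    have hw0 : 0 < w := by linarith [one_lt_tau ha]
    have hlast' : (1 : ℝ) ≤ d (j + 1 + q) + w⁻¹ := by
      have : (1 : ℝ) ≤ d (j + 1 + q) := by exact_mod_cast hlast.1
      linarith [inv_pos.2 hw0]
    have hside := (keepsSide_intCast_add_inv ha hlast.1 hlast.2 hw).cfApply ha (d := d) (j := j + 1)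
      (q := q) (fun m h1 h2 => hd m (by omega) (by omega)) (by exact_mod_cast hlast.1) hlast'
    have hd' : ∀ m, j + 1 ≤ m → m < j + 1 + q → 1 ≤ d m := fun m h1 h2 =>
      (hd m (by omega) (by omega)).1
    rw [show j + (q + 1) = j + 1 + q by omega, cfApply_succ] at hmem
    rw [cfApply_succ, cfApply_add d q 1 (j + 1), cfApply_succ, cfApply_zero]
    exact hside.add_inv_mem_lockInterval ha (one_le_cfApply (by exact_mod_cast hlast.1) hd')
      (one_le_cfApply hlast' hd') hmem

end keepsSide

lemma ra_eq_cfApply {a : ℕ} {z : ℝ} {p : ℕ} (hbig : (a : ℤ) ≤ pquot z (p + 1))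
    (hmin : ∀ m, 1 ≤ m → m ≤ p → pquot z m < a) :
    ra a z = cfApply (pquot z) 0 p (pquot z p) := by
  have h : ∃ i, 1 ≤ i ∧ (a : ℤ) ≤ pquot z i := ⟨p + 1, by omega, hbig⟩
  have hfind : Nat.find h = p + 1 :=
    (Nat.find_eq_iff h).2 ⟨⟨by omega, hbig⟩, fun m hm ⟨h1, h2⟩ =>
      absurd h2 (not_le.2 (hmin m h1 (by omega)))⟩
  rw [ra, dif_pos h, hfind]
  simpa using cfEval_map_range (pquot z) p 0

lemma inv_mem_uIcc {u v w : ℝ} (hu : 0 < u) (hv : 0 < v) (hw : w ∈ Set.uIcc u v) :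
    w⁻¹ ∈ Set.uIcc u⁻¹ v⁻¹ := by
  rw [Set.mem_uIcc] at hw ⊢
  rcases hw with ⟨h1, h2⟩ | ⟨h1, h2⟩
  · exact Or.inr ⟨inv_anti₀ (hu.trans_le h1) h2, inv_anti₀ hu h1⟩
  · exact Or.inl ⟨inv_anti₀ (hv.trans_le h1) h2, inv_anti₀ hv h1⟩

lemma cfApply_mem_uIcc {d : ℕ → ℤ} {j q : ℕ} {u v w : ℝ} (hu : 0 < u) (hv : 0 < v)
    (hd : ∀ m, j < m → m < j + q → 1 ≤ d m) (hw : w ∈ Set.uIcc u v) :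
    cfApply d j q w ∈ Set.uIcc (cfApply d j q u) (cfApply d j q v) := by
  induction q generalizing j with
  | zero => exact hw
  | succ q ih =>
    have hd' : ∀ m, j + 1 ≤ m → m < j + 1 + q → 1 ≤ d m := fun m h1 h2 => hd m (by omega) (by omega)
    have h := inv_mem_uIcc (cfApply_pos hu hd') (cfApply_pos hv hd')
      (ih fun m h1 h2 => hd m (by omega) (by omega))
    simp only [cfApply_succ, Set.mem_uIcc] at h ⊢
    rcases h with ⟨h1, h2⟩ | ⟨h1, h2⟩
    · exact Or.inl ⟨by linarith, by linarith⟩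
    · exact Or.inr ⟨by linarith, by linarith⟩

def Locked (a : ℕ) (A : ℕ → ℤ) (n : ℕ) (z : ℝ) : Prop :=
  (∀ j < n, pquot z j = A j) ∧ cfIter z n ∈ lockInterval a (A n)

section locked

variable {a n : ℕ} {A : ℕ → ℤ} {z : ℝ}

lemma pos_of_mem_lockInterval {b : ℤ} (ha : 2 ≤ a) (hb : 1 ≤ b) {w : ℝ}
    (hw : w ∈ lockInterval a b) : 0 < w := by
  have : (1 : ℝ) ≤ b := by exact_mod_cast hb
  linarith [hw.1, inv_pos.2 (zero_lt_one.trans (one_lt_sigma ha))]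

lemma Locked.of_ra (ha : 2 ≤ a) (hb : 1 ≤ A n) (h : Locked a A n (ra a z)) : Locked a A n z := by
  classical
  by_cases hex : ∃ i, 1 ≤ i ∧ (a : ℤ) ≤ pquot z i
  swap
  · rwa [ra, dif_neg hex] at h
  obtain ⟨hi1, hbig⟩ := Nat.find_spec hex
  have hmin : ∀ m, 1 ≤ m → m < Nat.find hex → pquot z m < a := fun m h1 h2 =>
    not_le.1 fun h3 => Nat.find_min hex h2 ⟨h1, h3⟩
  generalize Nat.find hex = i at hi1 hbig hmin
  obtain ⟨N, rfl⟩ : ∃ N, i = N + 1 := ⟨i - 1, by omega⟩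
  set dz := pquot z
  have hζa : (a : ℝ) ≤ cfIter z (N + 1) := by
    exact_mod_cast (Int.le_floor.1 hbig)
  have hζ0 : cfIter z (N + 1) ≠ 0 := by
    have : (2 : ℝ) ≤ a := by exact_mod_cast ha
    linarith
  have hdz : ∀ m, 1 ≤ m → m ≤ N → 1 ≤ dz m ∧ dz m ≤ a - 1 := fun m h1 h2 =>
    ⟨one_le_pquot hζ0 h1 (by omega), by have := hmin m h1 (by omega); omega⟩
  have hra : ra a z = cfApply dz 0 N (dz N) :=
    ra_eq_cfApply hbig fun m h1 h2 => hmin m h1 (by omega)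
  obtain ⟨hpre, hmem⟩ := h
  rw [hra] at hpre hmem
  have hne : cfIter (cfApply dz 0 N (dz N)) n ≠ 0 := (pos_of_mem_lockInterval ha hb hmem).ne'
  have hdz1 : ∀ m, 1 ≤ m → m ≤ N → 1 ≤ dz m := fun m h1 h2 => (hdz m h1 h2).1
  obtain ⟨hnN, hρ⟩ := cfIter_cfApply_last_of_ne_zero hdz1 hne
  refine ⟨fun j hj => ?_, ?_⟩
  · rw [← hpre j hj, pquot_cfApply_last_of_ne_zero hdz1
      fun h0 => hne (cfIter_eq_zero_of_le h0 (by omega))]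
  · rw [cfIter_eq_cfApply (N + 1 - n) (by rwa [Nat.add_sub_cancel' (by omega)]),
      Nat.add_sub_cancel' (by omega), show N + 1 - n = N - n + 1 by omega]
    refine cfApply_succ_mem_lockInterval ha (fun m h1 h2 => hdz m (by omega) (by omega))
      ((tau_lt ha).le.trans hζa) ?_
    rwa [Nat.add_sub_cancel' hnN, ← hρ]

lemma Locked.of_iterate_ra (ha : 2 ≤ a) (hb : 1 ≤ A n) {k : ℕ}
    (h : Locked a A n ((ra a)^[k] z)) : Locked a A n z := by
  induction k generalizing z with
  | zero => exact h
  | succ k ih => exact (ih (Function.iterate_succ_apply (ra a) k z ▸ h)).of_ra ha hb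

lemma Locked.mem_uIcc (ha : 2 ≤ a) (hb : 1 ≤ A n) (hA : ∀ m, 1 ≤ m → m < n → 1 ≤ A m)
    (h : Locked a A n z) :
    z ∈ Set.uIcc (cfApply A 0 n (A n - 1 + (sigma a)⁻¹)) (cfApply A 0 n (A n + (tau a)⁻¹)) := by
  obtain ⟨hpre, hmem⟩ := h
  have hz : z = cfApply A 0 n (cfIter z n) := by
    rw [← cfApply_congr fun m _ hm => hpre m (by omega)]
    have hne : cfIter z (0 + n) ≠ 0 := by simpa using (pos_of_mem_lockInterval ha hb hmem).ne'
    simpa using cfIter_eq_cfApply n hne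
  have hlo := pos_of_mem_lockInterval ha hb (Set.left_mem_Icc.2 (hmem.1.trans hmem.2))
  rw [hz]
  exact cfApply_mem_uIcc hlo (hlo.trans_le (hmem.1.trans hmem.2))
    (fun m h1 h2 => hA m h1 (by omega)) (Set.Icc_subset_uIcc hmem)

end locked

def attractionBasin (a : ℕ) (r : ℝ) : Set ℝ :=
  {z | z ∈ Set.Ico (0 : ℝ) (a : ℝ) ∧ ∃ k : ℕ, (ra a)^[k] z = r}

lemma ra_cfApply_natCast {a : ℕ} (ha : 2 ≤ a) {d : ℕ → ℤ} {p : ℕ}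
    (hd : ∀ i, 1 ≤ i → i ≤ p → 1 ≤ d i ∧ d i ≤ a - 1) :
    ra a (cfApply d 0 (p + 1) a) = cfApply d 0 p (d p) := by
  have ha1 : (1 : ℝ) < a := by exact_mod_cast ha
  have hd' : ∀ i, 1 ≤ i → i < p + 1 → 1 ≤ d i := fun i h1 h2 => (hd i h1 (by omega)).1
  have hpq : ∀ i < p + 1, pquot (cfApply d 0 (p + 1) a) i = d i := fun i hi =>
    pquot_cfApply ha1 hd' hi
  have hlast : pquot (cfApply d 0 (p + 1) a) (p + 1) = a := by
    rw [pquot, cfIter_cfApply ha1 hd' le_rfl, Nat.sub_self, cfApply_zero]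
    exact Int.floor_natCast a
  rw [ra_eq_cfApply (p := p) hlast.ge fun i h1 h2 => by
    rw [hpq i (by omega)]; have := hd i h1 h2; omega, hpq p (by omega)]
  exact cfApply_congr fun i _ hi => hpq i (by omega)

lemma cfApply_mem_Ico {d : ℕ → ℤ} {p : ℕ} {w : ℝ} (hp : 1 ≤ p) (hw : 1 < w)
    (hd : ∀ i, 1 ≤ i → i < p → 1 ≤ d i) : cfApply d 0 p w ∈ Set.Ico (d 0 : ℝ) (d 0 + 1) := by
  obtain ⟨q, rfl⟩ : ∃ q, p = q + 1 := ⟨p - 1, by omega⟩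
  have h := one_lt_cfApply (j := 1) (q := q) hw fun i h1 h2 => hd i h1 (by omega)
  rw [cfApply_succ]
  exact ⟨by linarith [inv_pos.2 (zero_lt_one.trans h)], by linarith [inv_lt_one_of_one_lt₀ h]⟩

section approximants

variable {a : ℕ} {d : ℕ → ℤ} {m : ℕ}

lemma pquot_cfApply_tau (ha : 2 ≤ a) (hper : ∀ k, d (m + k) = zigzag a k)
    (hd : ∀ i, 1 ≤ i → i < m → 1 ≤ d i) (i : ℕ) : pquot (cfApply d 0 m (tau a)) i = d i := by
  rcases lt_or_ge i m with hi | hi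
  · exact pquot_cfApply (one_lt_tau ha) hd hi
  · obtain ⟨k, rfl⟩ := Nat.exists_eq_add_of_le hi
    rw [pquot_add, cfIter_cfApply (one_lt_tau ha) hd le_rfl, Nat.sub_self, cfApply_zero,
      pquot_tau ha, hper]

/-- `r_a [d₀; …, a-1, 1, a] = [d₀; …, a-1, 1] = [d₀; …, a]`. -/
lemma ra_cfApply_zigzag (ha : 2 ≤ a) (hper : ∀ k, d (m + k) = zigzag a k)
    (hd : ∀ i, 1 ≤ i → i < m → 1 ≤ d i ∧ d i ≤ a - 1) (k : ℕ) :
    ra a (cfApply d 0 (m + 2 * (k + 1)) a) = cfApply d 0 (m + 2 * k) a := by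
  have hdig : ∀ i, 1 ≤ i → i ≤ m + 2 * k + 1 → 1 ≤ d i ∧ d i ≤ a - 1 := fun i h1 _ =>
    (lt_or_ge i m).elim (hd i h1) (digit_mem_of_zigzag ha hper)
  rw [show m + 2 * (k + 1) = m + 2 * k + 1 + 1 by ring, ra_cfApply_natCast ha hdig,
    eq_one_of_zigzag hper, cfApply_add d (m + 2 * k) 1, Nat.zero_add, cfApply_succ,
    eq_sub_one_of_zigzag hper]
  norm_num

lemma cfApply_tau_mem_closure_attractionBasin (ha : 2 ≤ a) (hper : ∀ k, d (m + k) = zigzag a k)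
    (hd : ∀ i, 1 ≤ i → i < m → 1 ≤ d i ∧ d i ≤ a - 1) (hd0 : 0 ≤ d 0 ∧ d 0 ≤ a - 1)
    (hm : 1 ≤ m) :
    cfApply d 0 m (tau a) ∈ closure (attractionBasin a (ra a (cfApply d 0 m a))) := by
  have ha1 : (1 : ℝ) < a := by exact_mod_cast ha
  refine mem_closure_of_tendsto (tendsto_cfApply_zigzag ha hper (fun i h1 h2 => (hd i h1 h2).1)
    ha1.le) (Filter.Eventually.of_forall fun k => ⟨?_, k + 1, ?_⟩)
  · have hd0R : (0 : ℝ) ≤ d 0 ∧ (d 0 : ℝ) ≤ a - 1 := by exact_mod_cast hd0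
    have h := cfApply_mem_Ico (d := d) (p := m + 2 * k) (by omega) ha1 fun i h1 _ =>
      ((lt_or_ge i m).elim (hd i h1) (digit_mem_of_zigzag ha hper)).1
    exact ⟨hd0R.1.trans h.1, by linarith [h.2]⟩
  · rw [Function.iterate_succ_apply']
    congr 1
    induction k with
    | zero => rfl
    | succ k ih => rw [Function.iterate_succ_apply, ra_cfApply_zigzag ha hper hd, ih]

end approximants

lemma sSup_sInf_eq_of_subset_uIcc {S : Set ℝ} {y₁ y₂ : ℝ} (hS : S ⊆ Set.uIcc y₁ y₂)
    (h₁ : y₁ ∈ closure S) (h₂ : y₂ ∈ closure S) :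
    (sSup S = y₁ ∧ sInf S = y₂) ∨ (sSup S = y₂ ∧ sInf S = y₁) := by
  have hne : S.Nonempty := closure_nonempty_iff.1 ⟨y₁, h₁⟩
  have hup : BddAbove S := ⟨_, fun z hz => (hS hz).2⟩
  have hlow : BddBelow S := ⟨_, fun z hz => (hS hz).1⟩
  have hle : closure S ⊆ Set.Icc (sInf S) (sSup S) :=
    closure_minimal (fun z hz => ⟨csInf_le hlow hz, le_csSup hup hz⟩) isClosed_Icc
  have hsup : sSup S = max y₁ y₂ :=
    le_antisymm (csSup_le hne fun z hz => (hS hz).2) (max_le (hle h₁).2 (hle h₂).2)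
  have hinf : sInf S = min y₁ y₂ :=
    le_antisymm (le_min (hle h₁).1 (hle h₂).1) (le_csInf hne fun z hz => (hS hz).1)
  rcases le_total y₁ y₂ with h | h
  · exact Or.inr ⟨by rw [hsup, max_eq_right h], by rw [hinf, min_eq_left h]⟩
  · exact Or.inl ⟨by rw [hsup, max_eq_left h], by rw [hinf, min_eq_right h]⟩

end ResolutionBasin

namespace IsCanonCF

open ResolutionBasin

variable {a n : ℕ} {A : ℕ → ℤ} {x : ℝ}

lemma cfIter_eq (hA : IsCanonCF x A n) : cfIter x n = A n := by
  have h := Int.floor_add_fract (cfIter x n)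
  rw [hA.2.1, add_zero] at h
  rw [← h, ← hA.1 n le_rfl, pquot]

lemma one_lt_cfIter (hA : IsCanonCF x A n) {j : ℕ} (h1 : 1 ≤ j) (hj : j ≤ n) :
    1 < cfIter x j := by
  obtain ⟨k, rfl⟩ : ∃ k, j = k + 1 := ⟨j - 1, by omega⟩
  exact (cfIter_eq_pquot_add_inv (cfIter_succ_ne_zero (hA.2.2 k (by omega)))).2

lemma one_le (hA : IsCanonCF x A n) {j : ℕ} (h1 : 1 ≤ j) (hj : j ≤ n) : 1 ≤ A j := by
  rw [← hA.1 j hj, pquot]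
  exact Int.le_floor.2 (by exact_mod_cast (hA.one_lt_cfIter h1 hj).le)

lemma two_le_last (hA : IsCanonCF x A n) (hn : 1 ≤ n) : 2 ≤ A n := by
  have h := hA.one_lt_cfIter hn le_rfl
  rw [hA.cfIter_eq] at h
  exact_mod_cast h

lemma one_le_last (hA : IsCanonCF x A n) (hx : 0 < x) : 1 ≤ A n := by
  rcases Nat.eq_zero_or_pos n with rfl | hn
  · have h := hA.cfIter_eq
    rw [cfIter_zero] at h
    have : (0 : ℝ) < A 0 := h ▸ hx
    exact_mod_cast this
  · linarith [hA.two_le_last hn]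

lemma zero_le_first (hA : IsCanonCF x A n) (hx : 0 < x) : 0 ≤ A 0 := by
  rw [← hA.1 0 (Nat.zero_le n), pquot, cfIter_zero]
  exact Int.floor_nonneg.2 hx.le

lemma eq_cfApply (hA : IsCanonCF x A n) (hx : 0 < x) : x = cfApply A 0 n (A n) := by
  have hne : cfIter x (0 + n) ≠ 0 := by
    rw [Nat.zero_add, hA.cfIter_eq]
    exact_mod_cast (zero_lt_one.trans_le (hA.one_le_last hx)).ne'
  rw [← cfIter_zero x, cfIter_eq_cfApply n hne, Nat.zero_add, hA.cfIter_eq]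
  exact cfApply_congr fun m _ hm => hA.1 m (by omega)

lemma locked (ha : 2 ≤ a) (hA : IsCanonCF x A n) : Locked a A n x := by
  refine ⟨fun j hj => hA.1 j hj.le, ?_⟩
  rw [hA.cfIter_eq]
  exact ⟨by linarith [inv_lt_one_of_one_lt₀ (one_lt_sigma ha)],
    by linarith [inv_pos.2 (zero_lt_one.trans (one_lt_tau ha))]⟩

end IsCanonCF

namespace ResolutionBasin

def rightEndDigits (a n : ℕ) (A : ℕ → ℤ) (i : ℕ) : ℤ :=
  if i ≤ n then A i else if Odd (i - n) then (a : ℤ) - 1 else 1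

def leftEndDigits (a n : ℕ) (A : ℕ → ℤ) (i : ℕ) : ℤ :=
  if i < n then A i else if i = n then A n - 1 else if i = n + 1 then 1
  else if Even (i - n) then (a : ℤ) - 1 else 1

section ends

variable {a n : ℕ} {A : ℕ → ℤ} {x : ℝ}

lemma rightEndDigits_add (k : ℕ) : rightEndDigits a n A (n + 1 + k) = zigzag a k := by
  rw [rightEndDigits, if_neg (by omega), zigzag, show n + 1 + k - n = k + 1 by omega]
  by_cases hk : Even k
  · rw [if_pos hk.add_one, if_pos hk]
  · rw [if_neg (Nat.not_odd_iff_even.2 (Nat.not_even_iff_odd.1 hk).add_one), if_neg hk]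

lemma leftEndDigits_add (k : ℕ) : leftEndDigits a n A (n + 2 + k) = zigzag a k := by
  rw [leftEndDigits, if_neg (by omega), if_neg (by omega), if_neg (by omega), zigzag,
    show n + 2 + k - n = k + 2 by omega]
  simp only [Nat.even_add, even_two, iff_true]

lemma cfApply_rightEndDigits (w : ℝ) :
    cfApply (rightEndDigits a n A) 0 (n + 1) w = cfApply A 0 n (A n + w⁻¹) := by
  rw [cfApply_add, Nat.zero_add, cfApply_succ, cfApply_zero, rightEndDigits, if_pos le_rfl]
  exact cfApply_congr fun m _ hm => if_pos (by omega)

lemma cfApply_leftEndDigits (w : ℝ) :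
    cfApply (leftEndDigits a n A) 0 (n + 2) w = cfApply A 0 n (A n - 1 + (1 + w⁻¹)⁻¹) := by
  have h0 : leftEndDigits a n A n = A n - 1 := by simp [leftEndDigits]
  have h1 : leftEndDigits a n A (n + 1) = 1 := by simp [leftEndDigits]
  rw [cfApply_add, Nat.zero_add, cfApply_succ, cfApply_succ, cfApply_zero, h0, h1]
  push_cast
  exact cfApply_congr fun m _ hm => if_pos (by omega)

lemma rightEndDigits_mem (hA : IsCanonCF x A n) (hbd : ∀ i ≤ n, A i ≤ (a : ℤ) - 1) (i : ℕ)
    (h1 : 1 ≤ i) (h2 : i < n + 1) :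
    1 ≤ rightEndDigits a n A i ∧ rightEndDigits a n A i ≤ a - 1 := by
  rw [rightEndDigits, if_pos (by omega)]
  exact ⟨hA.one_le h1 (by omega), hbd i (by omega)⟩

lemma leftEndDigits_mem (ha : 2 ≤ a) (hA : IsCanonCF x A n) (hbd : ∀ i ≤ n, A i ≤ (a : ℤ) - 1)
    (i : ℕ) (h1 : 1 ≤ i) (h2 : i < n + 2) :
    1 ≤ leftEndDigits a n A i ∧ leftEndDigits a n A i ≤ a - 1 := by
  rw [leftEndDigits]
  split_ifs with h3 h4 h5
  · exact ⟨hA.one_le h1 h3.le, hbd i h3.le⟩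
  · subst h4; have := hA.two_le_last h1; have := hbd i le_rfl; omega
  all_goals omega

lemma rightEnd_mem_closure (ha : 2 ≤ a) (hA : IsCanonCF x A n) (hx : 0 < x)
    (hbd : ∀ i ≤ n, A i ≤ (a : ℤ) - 1) :
    cfApply (rightEndDigits a n A) 0 (n + 1) (tau a) ∈ closure (attractionBasin a x) := by
  have hd0 : rightEndDigits a n A 0 = A 0 := if_pos (Nat.zero_le n)
  have h := cfApply_tau_mem_closure_attractionBasin ha rightEndDigits_add
    (rightEndDigits_mem hA hbd) (hd0 ▸ ⟨hA.zero_le_first hx, hbd 0 (Nat.zero_le n)⟩) (by omega)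
  rwa [ra_cfApply_natCast ha fun i h1 h2 => rightEndDigits_mem hA hbd i h1 (by omega),
    rightEndDigits, if_pos le_rfl,
    cfApply_congr (d := rightEndDigits a n A) (d' := A) fun m _ hm => if_pos (by omega),
    ← hA.eq_cfApply hx] at h

lemma leftEnd_mem_closure (ha : 2 ≤ a) (hA : IsCanonCF x A n) (hx : 0 < x)
    (hbd : ∀ i ≤ n, A i ≤ (a : ℤ) - 1) :
    cfApply (leftEndDigits a n A) 0 (n + 2) (tau a) ∈ closure (attractionBasin a x) := by
  have hd0 : 0 ≤ leftEndDigits a n A 0 ∧ leftEndDigits a n A 0 ≤ a - 1 := by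
    have := hA.zero_le_first hx
    have := hbd 0 (Nat.zero_le n)
    rcases Nat.eq_zero_or_pos n with rfl | hn
    · have := hA.one_le_last hx
      simp only [leftEndDigits, lt_irrefl, if_false, if_true]
      omega
    · rw [leftEndDigits, if_pos hn]; omega
  have h := cfApply_tau_mem_closure_attractionBasin ha leftEndDigits_add
    (leftEndDigits_mem ha hA hbd) hd0 (by omega)
  have h1 : leftEndDigits a n A (n + 1) = 1 := by simp [leftEndDigits]
  have hn : leftEndDigits a n A n = A n - 1 := by simp [leftEndDigits]
  rwa [ra_cfApply_natCast ha fun i h1 h2 => leftEndDigits_mem ha hA hbd i h1 (by omega), h1,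
    cfApply_add _ n 1, Nat.zero_add, cfApply_succ, cfApply_zero, hn,
    cfApply_congr (d := leftEndDigits a n A) (d' := A) fun m _ hm => if_pos (by omega),
    Int.cast_sub, Int.cast_one, inv_one, sub_add_cancel, ← hA.eq_cfApply hx] at h

end ends

end ResolutionBasin

open ResolutionBasin

theorem stmt_12_general (a : ℕ) (ha : 2 ≤ a) (x : ℚ) (hx0 : 0 < (x : ℝ))
    (n : ℕ) (A : ℕ → ℤ) (hA : IsCanonCF (x : ℝ) A n)
    (hbd : ∀ i ≤ n, A i ≤ (a : ℤ) - 1) :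
    let basin : Set ℝ := {z | z ∈ Set.Ico (0 : ℝ) (a : ℝ) ∧ ∃ k : ℕ, (ra a)^[k] z = (x : ℝ)}
    ∃ y₁ y₂ : ℝ,
      (∀ i, pquot y₁ i =
        if i ≤ n then A i else if Odd (i - n) then (a : ℤ) - 1 else 1) ∧
      (∀ i, pquot y₂ i =
        if i < n then A i else if i = n then A n - 1 else if i = n + 1 then 1
        else if Even (i - n) then (a : ℤ) - 1 else 1) ∧
      Irrational y₁ ∧ (∃ c b d : ℤ, c ≠ 0 ∧ (c : ℝ) * y₁ ^ 2 + b * y₁ + d = 0) ∧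
      Irrational y₂ ∧ (∃ c b d : ℤ, c ≠ 0 ∧ (c : ℝ) * y₂ ^ 2 + b * y₂ + d = 0) ∧
      ((sSup basin = y₁ ∧ sInf basin = y₂) ∨ (sSup basin = y₂ ∧ sInf basin = y₁)) := by
  intro basin
  have hAn := hA.one_le_last hx0
  have hsub : basin ⊆ Set.uIcc (cfApply (rightEndDigits a n A) 0 (n + 1) (tau a))
      (cfApply (leftEndDigits a n A) 0 (n + 2) (tau a)) := by
    rintro z ⟨-, k, hk⟩
    rw [cfApply_rightEndDigits, cfApply_leftEndDigits, Set.uIcc_comm]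
    exact (Locked.of_iterate_ra ha hAn (hk ▸ hA.locked ha)).mem_uIcc ha hAn
      fun m h1 h2 => hA.one_le h1 h2.le
  have hy₁ := (isQuadraticIrrational_tau ha).cfApply (rightEndDigits a n A) 0 (n + 1)
  have hy₂ := (isQuadraticIrrational_tau ha).cfApply (leftEndDigits a n A) 0 (n + 2)
  exact ⟨_, _,
    pquot_cfApply_tau ha rightEndDigits_add fun i h1 h2 => (rightEndDigits_mem hA hbd i h1 h2).1,
    pquot_cfApply_tau ha leftEndDigits_add fun i h1 h2 => (leftEndDigits_mem ha hA hbd i h1 h2).1,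
    hy₁.1, hy₁.2, hy₂.1, hy₂.2, sSup_sInf_eq_of_subset_uIcc hsub
      (rightEnd_mem_closure ha hA hx0 hbd) (leftEnd_mem_closure ha hA hx0 hbd)⟩

/-- The boundaries of the attraction basin of a rational
`p/q = [a₀; …, aₙ]` (all quotients `≤ a - 1`) are the quadratic irrationals
`[a₀; …, aₙ, a-1, 1, a-1, 1, …]` and `[a₀; …, aₙ - 1, 1, a-1, 1, a-1, 1, …]`. -/
theorem stmt_12 (a : ℕ) (ha : 2 ≤ a) (x : ℚ) (hx0 : 0 < (x : ℝ)) (hxa : (x : ℝ) < a)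
    (n : ℕ) (A : ℕ → ℤ) (hA : IsCanonCF (x : ℝ) A n)
    (hbd : ∀ i ≤ n, A i ≤ (a : ℤ) - 1) :
    let basin : Set ℝ := {z | z ∈ Set.Ico (0 : ℝ) (a : ℝ) ∧ ∃ k : ℕ, (ra a)^[k] z = (x : ℝ)}
    ∃ y₁ y₂ : ℝ,
      (∀ i, pquot y₁ i =
        if i ≤ n then A i else if Odd (i - n) then (a : ℤ) - 1 else 1) ∧
      (∀ i, pquot y₂ i =
        if i < n then A i else if i = n then A n - 1 else if i = n + 1 then 1
        else if Even (i - n) then (a : ℤ) - 1 else 1) ∧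
      Irrational y₁ ∧ (∃ c b d : ℤ, c ≠ 0 ∧ (c : ℝ) * y₁ ^ 2 + b * y₁ + d = 0) ∧
      Irrational y₂ ∧ (∃ c b d : ℤ, c ≠ 0 ∧ (c : ℝ) * y₂ ^ 2 + b * y₂ + d = 0) ∧
      ((sSup basin = y₁ ∧ sInf basin = y₂) ∨ (sSup basin = y₂ ∧ sInf basin = y₁)) :=
  stmt_12_general a ha x hx0 n A hA hbd
end
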